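/- arXiv:2005.00379 — 4 statements merged into one kernel-verified Lean document; each statement's English description precedes it below -/
import Mathlib

section
/- Let m, n, k be integers with m, n ≥ k ≥ 3, and let A be a 12⋯k-avoiding m×n (0,1)-matrix with exactly (k−1)(m + n − (k−1)) ones. Then the set of positions of the 1's of A can be partitioned into k−1 pairwise disjoint sets S₁, …, S_{k−1} such that for each t = 1,…,k−1, the set S_t is an R-L zigzag path of length m + n − (2t − 1). -/
/-!
Grade the 1's by `chainRank`, the length of a longest chain ending at a position that increases
strictly in both coordinates. Avoiding `12⋯k` bounds the rank by `k - 1`, and the positions of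
rank `t` form an antichain in the window `[t, m] × [t, n]`. Such an antichain meets each diagonal
`(i - t) + (n - j) = d` of the window at most once, so it has at most `m + n - (2t - 1)` elements.
These bounds add up to exactly the number of 1's, so every level meets every diagonal of its
window, and that forces it to be an R-L zigzag path.
-/

/-- The set of positions of the 1's of an `m × n` (0,1)-matrix `A` (1-indexed). -/
def onesSet (m n : ℕ) (A : ℕ → ℕ → Bool) : Finset (ℕ × ℕ) :=
  ((Finset.Icc 1 m) ×ˢ (Finset.Icc 1 n)).filter fun p => A p.1 p.2 = true

/-- `A` is `12⋯k`-avoiding. -/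
def AvoidId (m n k : ℕ) (A : ℕ → ℕ → Bool) : Prop :=
  ¬ ∃ r c : ℕ → ℕ,
    (∀ t, t + 1 < k → r t < r (t + 1) ∧ c t < c (t + 1)) ∧
    (∀ t, t < k → 1 ≤ r t ∧ r t ≤ m ∧ 1 ≤ c t ∧ c t ≤ n) ∧
    (∀ t, t < k → A (r t) (c t) = true)

/-- `S` is an R-L zigzag path of length `ℓ`: it lives in a `{u,…,p} × {v,…,q}`
window, contains `(u,q)` and `(p,v)`, has `ℓ = (p-u)+(q-v)+1` elements, and every
element other than `(p,v)` has exactly one of its left neighbor and its lower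
neighbor in `S`. -/
def IsRLZigzagPath (S : Finset (ℕ × ℕ)) (ℓ : ℕ) : Prop :=
  ∃ u p v q : ℕ, u ≤ p ∧ v ≤ q ∧
    (∀ x ∈ S, u ≤ x.1 ∧ x.1 ≤ p ∧ v ≤ x.2 ∧ x.2 ≤ q) ∧
    (u, q) ∈ S ∧ (p, v) ∈ S ∧
    S.card = ℓ ∧ ℓ = (p - u) + (q - v) + 1 ∧
    ∀ x ∈ S, x ≠ (p, v) → Xor' ((x.1, x.2 - 1) ∈ S) ((x.1 + 1, x.2) ∈ S)

def StrictNW (x y : ℕ × ℕ) : Prop := x.1 < y.1 ∧ x.2 < y.2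

instance : DecidableRel StrictNW := fun _ _ => inferInstanceAs (Decidable (_ ∧ _))

def chainRank (s : Finset (ℕ × ℕ)) (x : ℕ × ℕ) : ℕ :=
  1 + (s.filter (StrictNW · x)).attach.sup fun y => chainRank s y.1
termination_by x.1
decreasing_by exact (Finset.mem_filter.1 y.2).2.1

lemma chainRank_eq (s : Finset (ℕ × ℕ)) (x : ℕ × ℕ) :
    chainRank s x = 1 + (s.filter (StrictNW · x)).sup (chainRank s) := by
  rw [chainRank, Finset.sup_attach]

lemma one_le_chainRank (s : Finset (ℕ × ℕ)) (x : ℕ × ℕ) : 1 ≤ chainRank s x := by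
  rw [chainRank_eq]; omega

lemma chainRank_lt_chainRank {s : Finset (ℕ × ℕ)} {x y : ℕ × ℕ} (hx : x ∈ s)
    (hxy : StrictNW x y) : chainRank s x < chainRank s y := by
  rw [chainRank_eq s y, Nat.lt_one_add_iff]
  exact Finset.le_sup (f := chainRank s) (Finset.mem_filter.2 ⟨hx, hxy⟩)

lemma chainRank_le_min {s : Finset (ℕ × ℕ)} (hs : ∀ y ∈ s, 1 ≤ y.1 ∧ 1 ≤ y.2)
    {x : ℕ × ℕ} (hx : x ∈ s) : chainRank s x ≤ min x.1 x.2 := by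
  induction h : x.1 using Nat.strong_induction_on generalizing x with
  | _ i ih =>
    subst h
    have hsup : (s.filter (StrictNW · x)).sup (chainRank s) ≤ min x.1 x.2 - 1 := by
      refine Finset.sup_le fun y hy => ?_
      obtain ⟨hys, hyx⟩ := Finset.mem_filter.1 hy
      have := ih y.1 hyx.1 hys rfl
      have := hs y hys
      simp only [StrictNW] at hyx
      omega
    have := hs x hx
    rw [chainRank_eq]
    omega

lemma exists_chain_of_lt_chainRank {s : Finset (ℕ × ℕ)} (L : ℕ) {x : ℕ × ℕ} (hx : x ∈ s)
    (hL : L < chainRank s x) :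
    ∃ f : ℕ → ℕ × ℕ, (∀ t < L, StrictNW (f t) (f (t + 1))) ∧ (∀ t ≤ L, f t ∈ s) ∧ f L = x := by
  induction L generalizing x with
  | zero => exact ⟨fun _ => x, by simp, fun _ _ => hx, rfl⟩
  | succ L ih =>
    rw [chainRank_eq] at hL
    have hsup : L + 1 ≤ (s.filter (StrictNW · x)).sup (chainRank s) := by omega
    obtain ⟨y, hy, hLy⟩ := (Finset.le_sup_iff L.succ_pos).1 hsup
    obtain ⟨hys, hyx⟩ := Finset.mem_filter.1 hy
    obtain ⟨f, hf, hfs, hfL⟩ := ih hys hLy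
    refine ⟨Function.update f (L + 1) x, fun t ht => ?_, fun t ht => ?_, by simp⟩
    · rcases Nat.lt_succ_iff_lt_or_eq.1 ht with ht | rfl
      · rw [Function.update_of_ne (by omega), Function.update_of_ne (by omega)]
        exact hf t ht
      · rwa [Function.update_of_ne (by omega), Function.update_self, hfL]
    · rcases Nat.lt_or_eq_of_le ht with ht | rfl
      · rw [Function.update_of_ne (by omega)]
        exact hfs t (by omega)
      · rwa [Function.update_self]

lemma chainRank_le_of_avoidId {m n k : ℕ} {A : ℕ → ℕ → Bool} (hA : AvoidId m n k A)
    {x : ℕ × ℕ} (hx : x ∈ onesSet m n A) : chainRank (onesSet m n A) x ≤ k - 1 := by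
  by_contra! hk
  obtain ⟨f, hf, hfs, -⟩ := exists_chain_of_lt_chainRank (k - 1) hx hk
  have hmem : ∀ t < k, f t ∈ onesSet m n A := fun t ht => hfs t (by omega)
  simp only [onesSet, Finset.mem_filter, Finset.mem_product, Finset.mem_Icc] at hmem
  exact hA ⟨fun t => (f t).1, fun t => (f t).2, fun t ht => hf t (by omega),
    fun t ht => ⟨(hmem t ht).1.1.1, (hmem t ht).1.1.2, (hmem t ht).1.2.1, (hmem t ht).1.2.2⟩,
    fun t ht => (hmem t ht).2⟩

/-- Position of `x` along an R-L zigzag path starting at `(u, q)`: every step left or down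
adds one. -/
def diagIndex (u q : ℕ) (x : ℕ × ℕ) : ℕ := (x.1 - u) + (q - x.2)

section Antichain

variable {T : Finset (ℕ × ℕ)} {u p v q : ℕ}

lemma injOn_diagIndex (hT : IsAntichain StrictNW (T : Set (ℕ × ℕ)))
    (hwin : T ⊆ Finset.Icc u p ×ˢ Finset.Icc v q) : Set.InjOn (diagIndex u q) T := by
  intro x hx y hy hxy
  by_contra hne
  have hx' := Finset.mem_product.1 (hwin hx)
  have hy' := Finset.mem_product.1 (hwin hy)
  simp only [Finset.mem_Icc] at hx' hy'
  have h₁ : ¬ StrictNW x y := hT hx hy hne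
  have h₂ : ¬ StrictNW y x := hT hy hx (Ne.symm hne)
  simp only [diagIndex, StrictNW, not_and, not_lt] at hxy h₁ h₂
  exact hne (Prod.ext (by omega) (by omega))

lemma card_le_of_isAntichain (hT : IsAntichain StrictNW (T : Set (ℕ × ℕ)))
    (hwin : T ⊆ Finset.Icc u p ×ˢ Finset.Icc v q) : T.card ≤ (p - u) + (q - v) + 1 := by
  have := Finset.card_le_card_of_injOn (diagIndex u q)
    (t := Finset.range ((p - u) + (q - v) + 1)) (fun x hx => ?_) (injOn_diagIndex hT hwin)
  · rwa [Finset.card_range] at this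
  · have hx' := Finset.mem_product.1 (hwin hx)
    simp only [Finset.mem_Icc] at hx'
    simp only [Finset.coe_range, Set.mem_Iio, diagIndex]
    omega

lemma exists_diagIndex_eq_of_card_eq (hT : IsAntichain StrictNW (T : Set (ℕ × ℕ)))
    (hwin : T ⊆ Finset.Icc u p ×ˢ Finset.Icc v q) (hcard : T.card = (p - u) + (q - v) + 1)
    {d : ℕ} (hd : d ≤ (p - u) + (q - v)) : ∃ x ∈ T, diagIndex u q x = d := by
  have himg : T.image (diagIndex u q) = Finset.range ((p - u) + (q - v) + 1) := by
    refine Finset.eq_of_subset_of_card_le (fun d hd => ?_) ?_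
    · obtain ⟨x, hx, rfl⟩ := Finset.mem_image.1 hd
      have hx' := Finset.mem_product.1 (hwin hx)
      simp only [Finset.mem_Icc] at hx'
      simp only [Finset.mem_range, diagIndex]
      omega
    · rw [Finset.card_image_of_injOn (injOn_diagIndex hT hwin), hcard, Finset.card_range]
  exact Finset.mem_image.1 (himg ▸ Finset.mem_range.2 (Nat.lt_succ_of_le hd))

lemma isRLZigzagPath_of_isAntichain (hv : 1 ≤ v) (hT : IsAntichain StrictNW (T : Set (ℕ × ℕ)))
    (hwin : T ⊆ Finset.Icc u p ×ˢ Finset.Icc v q) (hcard : T.card = (p - u) + (q - v) + 1) :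
    IsRLZigzagPath T ((p - u) + (q - v) + 1) := by
  have hbd : ∀ x ∈ T, u ≤ x.1 ∧ x.1 ≤ p ∧ v ≤ x.2 ∧ x.2 ≤ q := fun x hx => by
    simpa only [Finset.mem_product, Finset.mem_Icc, and_assoc] using hwin hx
  have hinj := injOn_diagIndex hT hwin
  have hsurj : ∀ {d}, d ≤ (p - u) + (q - v) → ∃ x ∈ T, diagIndex u q x = d :=
    exists_diagIndex_eq_of_card_eq hT hwin hcard
  have hend : ∀ x ∈ T, diagIndex u q x = (p - u) + (q - v) → x = (p, v) := fun x hx hxD => by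
    have := hbd x hx
    simp only [diagIndex] at hxD
    exact Prod.ext (by omega) (by omega)
  obtain ⟨a, ha, ha0⟩ := hsurj (Nat.zero_le _)
  obtain ⟨b, hb, hbD⟩ := hsurj le_rfl
  have hua : a = (u, q) := by
    have := hbd a ha
    simp only [diagIndex] at ha0
    exact Prod.ext (by omega) (by omega)
  obtain ⟨hua₁, hap, hva₂, haq⟩ := hbd a ha
  refine ⟨u, p, v, q, hua₁.trans hap, hva₂.trans haq, hbd, hua ▸ ha, hend b hb hbD ▸ hb, hcard,
    rfl, fun x hx hxpv => (xor_iff_or_and_not_and _ _).2 ⟨?_, ?_⟩⟩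
  · have hxD : diagIndex u q x < (p - u) + (q - v) := by
      have := hbd x hx
      exact lt_of_le_of_ne (by simp only [diagIndex]; omega) fun h => hxpv (hend x hx h)
    -- the point on the next diagonal is not comparable with `x`, so it is a neighbour of `x`
    obtain ⟨y, hy, hyx⟩ := hsurj hxD
    have h₁ : ¬ StrictNW x y := hT hx hy (by rintro rfl; omega)
    have h₂ : ¬ StrictNW y x := hT hy hx (by rintro rfl; omega)
    have := hbd x hx
    have := hbd y hy
    obtain ⟨y₁, y₂⟩ := y
    simp only [diagIndex, StrictNW, not_and, not_lt] at hyx h₁ h₂ this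
    rcases (by omega : (y₁ = x.1 ∧ y₂ = x.2 - 1) ∨ (y₁ = x.1 + 1 ∧ y₂ = x.2)) with
      ⟨rfl, rfl⟩ | ⟨rfl, rfl⟩
    exacts [.inl hy, .inr hy]
  · -- both neighbours of `x` lie on the same diagonal
    rintro ⟨hl, hd⟩
    have := hbd _ hl
    have := hbd x hx
    have := hinj hl hd (by simp only [diagIndex]; omega)
    simp at this

end Antichain

lemma sum_Icc_sub_add_sub_add_one {m n K : ℕ} (hm : K ≤ m) (hn : K ≤ n) :
    ∑ t ∈ Finset.Icc 1 K, ((m - t) + (n - t) + 1) = K * (m + n - K) := by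
  induction K with
  | zero => simp
  | succ K ih =>
    rw [Finset.sum_Icc_succ_top (by omega), ih (by omega) (by omega)]
    zify [(by omega : K + 1 ≤ m), (by omega : K + 1 ≤ n), (by omega : K ≤ m + n),
      (by omega : K + 1 ≤ m + n)]
    ring

def rankLevel (s : Finset (ℕ × ℕ)) (t : ℕ) : Finset (ℕ × ℕ) := s.filter (chainRank s · = t)

section RankLevel

variable {s : Finset (ℕ × ℕ)}

lemma disjoint_rankLevel {t₁ t₂ : ℕ} (h : t₁ ≠ t₂) :
    Disjoint (rankLevel s t₁) (rankLevel s t₂) :=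
  Finset.disjoint_filter.2 fun _ _ h₁ h₂ => h (h₁ ▸ h₂)

lemma biUnion_rankLevel {K : ℕ} (hK : ∀ x ∈ s, chainRank s x ≤ K) :
    (Finset.Icc 1 K).biUnion (rankLevel s) = s := by
  ext x
  simp only [rankLevel, Finset.mem_biUnion, Finset.mem_Icc, Finset.mem_filter]
  exact ⟨fun ⟨_, _, hx, _⟩ => hx, fun hx => ⟨_, ⟨one_le_chainRank s x, hK x hx⟩, hx, rfl⟩⟩

lemma isAntichain_rankLevel (t : ℕ) : IsAntichain StrictNW (rankLevel s t : Set (ℕ × ℕ)) := by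
  intro x hx y hy _ hxy
  simp only [rankLevel, Finset.mem_coe, Finset.mem_filter] at hx hy
  exact (chainRank_lt_chainRank hx.1 hxy).ne (hx.2.trans hy.2.symm)

lemma rankLevel_subset {m n : ℕ} (hs : s ⊆ Finset.Icc 1 m ×ˢ Finset.Icc 1 n) (t : ℕ) :
    rankLevel s t ⊆ Finset.Icc t m ×ˢ Finset.Icc t n := by
  have hbd : ∀ y ∈ s, 1 ≤ y.1 ∧ y.1 ≤ m ∧ 1 ≤ y.2 ∧ y.2 ≤ n := fun y hy => by
    simpa only [Finset.mem_product, Finset.mem_Icc, and_assoc] using hs hy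
  intro x hx
  obtain ⟨hxs, rfl⟩ := Finset.mem_filter.1 hx
  have := chainRank_le_min (fun y hy => ⟨(hbd y hy).1, (hbd y hy).2.2.1⟩) hxs
  have := hbd x hxs
  simp only [Finset.mem_product, Finset.mem_Icc]
  omega

lemma card_rankLevel_eq {m n K : ℕ} (hs : s ⊆ Finset.Icc 1 m ×ˢ Finset.Icc 1 n)
    (hK : ∀ x ∈ s, chainRank s x ≤ K) (hm : K ≤ m) (hn : K ≤ n)
    (hcard : s.card = K * (m + n - K)) {t : ℕ} (ht : t ∈ Finset.Icc 1 K) :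
    (rankLevel s t).card = (m - t) + (n - t) + 1 := by
  have hle : ∀ t ∈ Finset.Icc 1 K, (rankLevel s t).card ≤ (m - t) + (n - t) + 1 := fun t _ =>
    card_le_of_isAntichain (isAntichain_rankLevel t) (rankLevel_subset hs t)
  refine (Finset.sum_eq_sum_iff_of_le hle).1 ?_ t ht
  rw [sum_Icc_sub_add_sub_add_one hm hn, ← hcard, ← Finset.card_biUnion
    (fun _ _ _ _ h => disjoint_rankLevel h), biUnion_rankLevel hK]

end RankLevel

theorem stmt_7_general (m n k : ℕ) (hm : k ≤ m) (hn : k ≤ n)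
    (A : ℕ → ℕ → Bool) (hA : AvoidId m n k A)
    (hcard : (onesSet m n A).card = (k - 1) * (m + n - (k - 1))) :
    ∃ S : ℕ → Finset (ℕ × ℕ),
      (∀ t₁ t₂ : ℕ, 1 ≤ t₁ → t₁ < t₂ → t₂ ≤ k - 1 → Disjoint (S t₁) (S t₂)) ∧
      (Finset.Icc 1 (k - 1)).biUnion S = onesSet m n A ∧
      ∀ t : ℕ, 1 ≤ t → t ≤ k - 1 →
        IsRLZigzagPath (S t) (m + n - (2 * t - 1)) := by
  have hs : onesSet m n A ⊆ Finset.Icc 1 m ×ˢ Finset.Icc 1 n := Finset.filter_subset _ _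
  have hK : ∀ x ∈ onesSet m n A, chainRank (onesSet m n A) x ≤ k - 1 :=
    fun _ => chainRank_le_of_avoidId hA
  refine ⟨rankLevel (onesSet m n A), fun t₁ t₂ _ h _ => disjoint_rankLevel h.ne,
    biUnion_rankLevel hK, fun t ht₁ ht₂ => ?_⟩
  have hlen : m + n - (2 * t - 1) = (m - t) + (n - t) + 1 := by omega
  rw [hlen]
  exact isRLZigzagPath_of_isAntichain ht₁ (isAntichain_rankLevel t) (rankLevel_subset hs t)
    (card_rankLevel_eq hs hK (by omega) (by omega) hcard (Finset.mem_Icc.2 ⟨ht₁, ht₂⟩))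

theorem stmt_7 (m n k : ℕ) (hk : 3 ≤ k) (hm : k ≤ m) (hn : k ≤ n)
    (A : ℕ → ℕ → Bool) (hA : AvoidId m n k A)
    (hcard : (onesSet m n A).card = (k - 1) * (m + n - (k - 1))) :
    ∃ S : ℕ → Finset (ℕ × ℕ),
      (∀ t₁ t₂ : ℕ, 1 ≤ t₁ → t₁ < t₂ → t₂ ≤ k - 1 → Disjoint (S t₁) (S t₂)) ∧
      (Finset.Icc 1 (k - 1)).biUnion S = onesSet m n A ∧
      ∀ t : ℕ, 1 ≤ t → t ≤ k - 1 →
        IsRLZigzagPath (S t) (m + n - (2 * t - 1)) :=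
  stmt_7_general m n k hm hn A hA hcard
end

section
/- Let m, n, k be integers with m, n ≥ k ≥ 3, and let A be a 12⋯k-avoiding m×n (0,1)-matrix whose number of 1's is strictly less than (k−1)(m + n − (k−1)). Then there exists a position (i,j) with A(i,j) = 0 such that the matrix obtained from A by changing the entry in position (i,j) to 1 is still 12⋯k-avoiding. -/
/-- Number of 1's of an `m × n` (0,1)-matrix `A` (1-indexed entries). -/
def onesCount (m n : ℕ) (A : ℕ → ℕ → Bool) : ℕ :=
  (((Finset.Icc 1 m) ×ˢ (Finset.Icc 1 n)).filter fun p => A p.1 p.2 = true).card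

/-- The matrix obtained from `A` by changing the entry in position `(i, j)` to `1`. -/
def setOne (A : ℕ → ℕ → Bool) (i j : ℕ) : ℕ → ℕ → Bool :=
  fun i' j' => if i' = i ∧ j' = j then true else A i' j'

/-!
Suppose no zero of `A` can be turned into a one without creating `12⋯k`. Then every zero
`(i, j)` sits between a chain of `a` ones strictly north-west of it and a chain of `b` ones
strictly south-east of it with `a + b = k - 1`. Give each cell the rank `t` of the longest chain
strictly north-west of it. Fix `t ≤ k - 2` and walk down a diagonal from its first cell, as long as
the rank stays `≤ t`. The cell where the walk stops is a one: a zero there would sit either on the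
last row or column, where `b = 0` forces `a = k - 1 > t`, or just before a cell of rank `> t`,
whose `(t + 1)`-chain followed by the south-east chain of the zero gives a `12⋯k`. Its rank is
exactly `t`: on the last row or column because of the staircases of ones near the corners `(m, 1)`
and `(1, n)`, whose cells are too cramped to be zeros. So each of the `m + n - 1 - 2t` diagonals
with room for a `t`-chain on both sides carries a one of rank `t`, and summing over `t < k - 1`
gives `(k - 1)(m + n - (k - 1))` ones.
-/

open Finset

def HasChain (A : ℕ → ℕ → Bool) (a i₀ j₀ i₁ j₁ : ℕ) : Prop :=
  ∃ r c : ℕ → ℕ,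
    (∀ t, t + 1 < a → r t < r (t + 1) ∧ c t < c (t + 1)) ∧
    (∀ t, t < a → i₀ ≤ r t ∧ r t ≤ i₁ ∧ j₀ ≤ c t ∧ c t ≤ j₁) ∧
    (∀ t, t < a → A (r t) (c t) = true)

lemma add_sub_le_of_lt_succ {r : ℕ → ℕ} {a : ℕ} (h : ∀ t, t + 1 < a → r t < r (t + 1))
    {s t : ℕ} (hst : s ≤ t) (ht : t < a) : r s + (t - s) ≤ r t := by
  induction t with
  | zero => simp_all
  | succ t ih =>
    rcases eq_or_lt_of_le hst with rfl | hst
    · simp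
    · have := ih (by omega) (by omega)
      have := h t ht
      omega

lemma sum_range_sub_sub_two_mul (K C : ℕ) (h : 2 * K ≤ C) :
    ∑ t ∈ range K, (C - 1 - 2 * t) = K * (C - K) := by
  induction K with
  | zero => simp
  | succ K ih =>
    rw [sum_range_succ, ih (by omega)]
    obtain ⟨D, rfl⟩ := Nat.exists_eq_add_of_le h
    rw [show 2 * (K + 1) + D - K = K + 2 + D by omega,
      show 2 * (K + 1) + D - 1 - 2 * K = D + 1 by omega,
      show 2 * (K + 1) + D - (K + 1) = K + 1 + D by omega]
    ring

lemma setOne_apply_of_not {A : ℕ → ℕ → Bool} {i j i' j' : ℕ} (h : ¬(i' = i ∧ j' = j)) :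
    setOne A i j i' j' = A i' j' :=
  if_neg h

namespace HasChain

variable {A : ℕ → ℕ → Bool} {a b i j i₀ j₀ i₁ j₁ : ℕ}

lemma mono_length (h : HasChain A a i₀ j₀ i₁ j₁) (hba : b ≤ a) : HasChain A b i₀ j₀ i₁ j₁ := by
  obtain ⟨r, c, hs, hb, hA⟩ := h
  exact ⟨r, c, fun t ht => hs t (by omega), fun t ht => hb t (by omega),
    fun t ht => hA t (by omega)⟩

lemma mono_rect {i₀' j₀' i₁' j₁' : ℕ} (h : HasChain A a i₀ j₀ i₁ j₁) (hi₀ : i₀' ≤ i₀)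
    (hj₀ : j₀' ≤ j₀) (hi₁ : i₁ ≤ i₁') (hj₁ : j₁ ≤ j₁') : HasChain A a i₀' j₀' i₁' j₁' := by
  obtain ⟨r, c, hs, hb, hA⟩ := h
  exact ⟨r, c, hs, fun t ht => by have := hb t ht; omega, hA⟩

lemma length_le (h : HasChain A a i₀ j₀ i₁ j₁) : a ≤ i₁ + 1 - i₀ ∧ a ≤ j₁ + 1 - j₀ := by
  obtain ⟨r, c, hs, hb, -⟩ := h
  rcases Nat.eq_zero_or_pos a with rfl | ha
  · simp
  have hr := add_sub_le_of_lt_succ (fun t ht => (hs t ht).1) (Nat.zero_le (a - 1)) (by omega)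
  have hc := add_sub_le_of_lt_succ (fun t ht => (hs t ht).2) (Nat.zero_le (a - 1)) (by omega)
  have := hb 0 ha
  have := hb (a - 1) (by omega)
  omega

lemma dropLast (h : HasChain A (a + 1) i₀ j₀ i₁ j₁) : HasChain A a i₀ j₀ (i₁ - 1) (j₁ - 1) := by
  obtain ⟨r, c, hs, hb, hA⟩ := h
  refine ⟨r, c, fun t ht => hs t (by omega), fun t ht => ?_, fun t ht => hA t (by omega)⟩
  have := add_sub_le_of_lt_succ (fun t ht => (hs t ht).1) ht.le (Nat.lt_succ_self a)
  have := add_sub_le_of_lt_succ (fun t ht => (hs t ht).2) ht.le (Nat.lt_succ_self a)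
  have := hb t (by omega)
  have := hb a (by omega)
  omega

lemma append (h₁ : HasChain A a 1 1 i j) (h₂ : HasChain A b (i + 1) (j + 1) i₁ j₁)
    (hi : i ≤ i₁) (hj : j ≤ j₁) : HasChain A (a + b) 1 1 i₁ j₁ := by
  obtain ⟨r₁, c₁, hs₁, hb₁, hA₁⟩ := h₁
  obtain ⟨r₂, c₂, hs₂, hb₂, hA₂⟩ := h₂
  refine ⟨fun t => if t < a then r₁ t else r₂ (t - a),
    fun t => if t < a then c₁ t else c₂ (t - a), fun t ht => ?_, fun t ht => ?_, fun t ht => ?_⟩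
  · dsimp only
    split_ifs with h h'
    · exact hs₁ t h'
    · have := hb₁ t h
      have := hb₂ 0 (by omega)
      rw [show t + 1 - a = 0 by omega]
      omega
    · omega
    · rw [show t + 1 - a = t - a + 1 by omega]
      exact hs₂ _ (by omega)
  · dsimp only
    split_ifs with h
    · have := hb₁ t h
      omega
    · have := hb₂ (t - a) (by omega)
      omega
  · dsimp only
    split_ifs with h
    · exact hA₁ t h
    · exact hA₂ _ (by omega)

lemma of_setOne (h : HasChain (setOne A i j) a i₀ j₀ i₁ j₁) :
    HasChain A a i₀ j₀ i₁ j₁ ∨ ∃ b c, b + c + 1 = a ∧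
      HasChain A b i₀ j₀ (i - 1) (j - 1) ∧ HasChain A c (i + 1) (j + 1) i₁ j₁ := by
  obtain ⟨r, c, hs, hb, hA⟩ := h
  have hr {s t} (hst : s ≤ t) (ht : t < a) :=
    add_sub_le_of_lt_succ (fun t ht => (hs t ht).1) hst ht
  have hc {s t} (hst : s ≤ t) (ht : t < a) :=
    add_sub_le_of_lt_succ (fun t ht => (hs t ht).2) hst ht
  by_cases hpass : ∃ t₀ < a, r t₀ = i ∧ c t₀ = j
  · obtain ⟨t₀, ht₀, rfl, rfl⟩ := hpass
    have hA' : ∀ t < a, t ≠ t₀ → A (r t) (c t) = true := fun t ht hne => by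
      have hne' : ¬(r t = r t₀ ∧ c t = c t₀) := by
        rcases Nat.lt_or_gt_of_ne hne with h | h
        · have := hr h.le ht₀
          omega
        · have := hr h.le ht
          omega
      rw [← setOne_apply_of_not (A := A) hne']
      exact hA t ht
    refine .inr ⟨t₀, a - 1 - t₀, by omega,
      ⟨r, c, fun t ht => hs t (by omega), fun t ht => ?_, fun t ht => hA' t (by omega) (by omega)⟩,
      ⟨fun s => r (t₀ + 1 + s), fun s => c (t₀ + 1 + s), fun s hs' => hs _ (by omega),
        fun s hs' => ?_, fun s hs' => hA' _ (by omega) (by omega)⟩⟩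
    · have := hb t (by omega)
      have := hr ht.le ht₀
      have := hc ht.le ht₀
      omega
    · dsimp only
      have := hb (t₀ + 1 + s) (by omega)
      have := hr (s := t₀) (t := t₀ + 1 + s) (by omega) (by omega)
      have := hc (s := t₀) (t := t₀ + 1 + s) (by omega) (by omega)
      omega
  · push Not at hpass
    exact .inl ⟨r, c, hs, hb, fun t ht => by
      rw [← setOne_apply_of_not (A := A) (fun h => hpass t ht h.1 h.2)]
      exact hA t ht⟩

end HasChain

def HasRank (A : ℕ → ℕ → Bool) (t i j : ℕ) : Prop :=
  HasChain A t 1 1 (i - 1) (j - 1) ∧ ¬HasChain A (t + 1) 1 1 (i - 1) (j - 1)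

lemma HasRank.unique {A : ℕ → ℕ → Bool} {t t' i j : ℕ} (h : HasRank A t i j)
    (h' : HasRank A t' i j) : t = t' :=
  le_antisymm (not_lt.1 fun hlt => h'.2 (h.1.mono_length hlt))
    (not_lt.1 fun hlt => h.2 (h'.1.mono_length hlt))

open Classical in
noncomputable def rankCells (m n : ℕ) (A : ℕ → ℕ → Bool) (t : ℕ) : Finset (ℕ × ℕ) :=
  (Icc 1 m ×ˢ Icc 1 n).filter fun p => A p.1 p.2 = true ∧ HasRank A t p.1 p.2

lemma sum_card_rankCells_le (m n : ℕ) (A : ℕ → ℕ → Bool) (K : ℕ) :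
    ∑ t ∈ range K, #(rankCells m n A t) ≤ onesCount m n A := by
  classical
  have hdisj : (range K : Set ℕ).PairwiseDisjoint (rankCells m n A) :=
    fun t _ t' _ hne => disjoint_filter.2 fun _ _ h h' => hne (h.2.unique h'.2)
  rw [← card_biUnion hdisj]
  refine card_le_card (biUnion_subset.2 fun t _ p hp => ?_)
  simp only [rankCells, mem_filter] at hp ⊢
  exact ⟨hp.1, hp.2.1⟩

def IsSaturated (m n k : ℕ) (A : ℕ → ℕ → Bool) : Prop :=
  ∀ i j, 1 ≤ i → i ≤ m → 1 ≤ j → j ≤ n → A i j = false → ¬AvoidId m n k (setOne A i j)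

namespace IsSaturated

variable {m n k t i j : ℕ} {A : ℕ → ℕ → Bool}

lemma exists_split (hA : AvoidId m n k A) (hS : IsSaturated m n k A) (hi₁ : 1 ≤ i) (hi : i ≤ m)
    (hj₁ : 1 ≤ j) (hj : j ≤ n) (h0 : A i j = false) :
    ∃ a b, a + b + 1 = k ∧
      HasChain A a 1 1 (i - 1) (j - 1) ∧ HasChain A b (i + 1) (j + 1) m n :=
  (HasChain.of_setOne (not_not.1 (hS i j hi₁ hi hj₁ hj h0))).resolve_left hA

lemma apply_eq_true_of_cramped (hA : AvoidId m n k A) (hS : IsSaturated m n k A)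
    (hi₁ : 1 ≤ i) (hi : i ≤ m) (hj₁ : 1 ≤ j) (hj : j ≤ n)
    (hcramped : min (i - 1) (j - 1) + min (m - i) (n - j) + 1 < k) : A i j = true := by
  by_contra h0
  obtain ⟨a, b, hab, hnw, hse⟩ :=
    hS.exists_split hA hi₁ hi hj₁ hj (Bool.not_eq_true _ ▸ h0)
  have := hnw.length_le
  have := hse.length_le
  omega

lemma hasChain_bottomLeft (hA : AvoidId m n k A) (hS : IsSaturated m n k A) (hm : k ≤ m)
    (hn : k ≤ n) (ht : t + 2 ≤ k) : HasChain A t 1 1 (m - 1) t :=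
  ⟨fun u => m - k + 2 + u, fun u => u + 1, fun u hu => by dsimp only; omega,
    fun u hu => by dsimp only; omega, fun u hu => hS.apply_eq_true_of_cramped
      (i := m - k + 2 + u) (j := u + 1) hA (by omega) (by omega) (by omega) (by omega) (by omega)⟩

lemma hasChain_topRight (hA : AvoidId m n k A) (hS : IsSaturated m n k A) (hm : k ≤ m)
    (hn : k ≤ n) (ht : t + 2 ≤ k) : HasChain A t 1 1 t (n - 1) :=
  ⟨fun u => u + 1, fun u => n - k + 2 + u, fun u hu => by dsimp only; omega,
    fun u hu => by dsimp only; omega, fun u hu => hS.apply_eq_true_of_cramped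
      (i := u + 1) (j := n - k + 2 + u) hA (by omega) (by omega) (by omega) (by omega) (by omega)⟩

lemma apply_eq_true_of_not_hasChain (hA : AvoidId m n k A) (hS : IsSaturated m n k A)
    (hi₁ : 1 ≤ i) (hi : i ≤ m) (hj₁ : 1 ≤ j) (hj : j ≤ n) (ht : t + 2 ≤ k)
    (hnw : ¬HasChain A (t + 1) 1 1 (i - 1) (j - 1))
    (hstop : i = m ∨ j = n ∨ HasChain A (t + 1) 1 1 i j) : A i j = true := by
  by_contra h0
  obtain ⟨a, b, hab, hNW, hSE⟩ :=
    hS.exists_split hA hi₁ hi hj₁ hj (Bool.not_eq_true _ ▸ h0)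
  have ha : a ≤ t := not_lt.1 fun hlt => hnw (hNW.mono_length hlt)
  have := hSE.length_le
  rcases hstop with rfl | rfl | hext
  · omega
  · omega
  · exact hA ((hext.append hSE hi hj).mono_length (by omega))

lemma exists_one_of_rank_on_diagonal (hA : AvoidId m n k A) (hS : IsSaturated m n k A)
    (hm : k ≤ m) (hn : k ≤ n) (ht : t + 2 ≤ k) {i₀ j₀ : ℕ} (hstart : i₀ = 1 ∨ j₀ = 1)
    (hi₀ : 1 ≤ i₀) (hj₀ : 1 ≤ j₀) (hroom : i₀ + t + 1 ≤ j₀ + m) (hroom' : j₀ + t + 1 ≤ i₀ + n) :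
    ∃ s, i₀ + s ≤ m ∧ j₀ + s ≤ n ∧
      A (i₀ + s) (j₀ + s) = true ∧ HasRank A t (i₀ + s) (j₀ + s) := by
  classical
  let P s := ¬HasChain A (t + 1) 1 1 (i₀ + s - 1) (j₀ + s - 1)
  set L := min (m - i₀) (n - j₀)
  -- the cell where the walk down the diagonal stops
  set s := Nat.findGreatest P L
  have hP0 : P 0 := fun h => by
    have := h.length_le
    omega
  have hPs : P s := Nat.findGreatest_spec (Nat.zero_le L) hP0
  have hsL : s ≤ L := Nat.findGreatest_le L
  have hstop : i₀ + s = m ∨ j₀ + s = n ∨ HasChain A (t + 1) 1 1 (i₀ + s) (j₀ + s) := by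
    rcases eq_or_lt_of_le hsL with h | h
    · omega
    · exact .inr <| .inr <| not_not.1 (Nat.findGreatest_is_greatest (Nat.lt_succ_self s) h)
  refine ⟨s, by omega, by omega, hS.apply_eq_true_of_not_hasChain hA (by omega) (by omega)
    (by omega) (by omega) ht hPs hstop, ?_, hPs⟩
  rcases hstop with h | h | h
  · exact (hS.hasChain_bottomLeft hA hm hn ht).mono_rect le_rfl le_rfl (by omega) (by omega)
  · exact (hS.hasChain_topRight hA hm hn ht).mono_rect le_rfl le_rfl (by omega) (by omega)
  · exact h.dropLast

lemma card_rankCells_ge (hA : AvoidId m n k A) (hS : IsSaturated m n k A) (hm : k ≤ m)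
    (hn : k ≤ n) (ht : t + 2 ≤ k) : m + n - 1 - 2 * t ≤ #(rankCells m n A t) := by
  have hsurj : Set.SurjOn (fun p : ℕ × ℕ => p.1 + n - p.2) (rankCells m n A t)
      (Icc (t + 1) (m + n - 1 - t)) := by
    intro d hd
    rw [coe_Icc, Set.mem_Icc] at hd
    obtain ⟨i₀, j₀, hstart, hi₀, hj₀, hd₀⟩ :
        ∃ i₀ j₀, (i₀ = 1 ∨ j₀ = 1) ∧ 1 ≤ i₀ ∧ 1 ≤ j₀ ∧ i₀ + n = d + j₀ := by
      rcases le_or_gt n d with h | h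
      · exact ⟨d - n + 1, 1, .inr rfl, by omega, le_rfl, by omega⟩
      · exact ⟨1, n - d + 1, .inl rfl, le_rfl, by omega, by omega⟩
    obtain ⟨s, hi, hj, hone, hrank⟩ :=
      hS.exists_one_of_rank_on_diagonal hA hm hn ht hstart hi₀ hj₀ (by omega) (by omega)
    refine ⟨(i₀ + s, j₀ + s), ?_, by dsimp only; omega⟩
    simp only [rankCells, mem_coe, mem_filter, mem_product, mem_Icc]
    exact ⟨by omega, hone, hrank⟩
  calc m + n - 1 - 2 * t = #(Icc (t + 1) (m + n - 1 - t)) := by simp only [Nat.card_Icc]; omega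
    _ ≤ #(rankCells m n A t) := card_le_card_of_surjOn _ hsurj

lemma le_onesCount (hA : AvoidId m n k A) (hS : IsSaturated m n k A) (hm : k ≤ m)
    (hn : k ≤ n) : (k - 1) * (m + n - (k - 1)) ≤ onesCount m n A :=
  calc (k - 1) * (m + n - (k - 1)) = ∑ t ∈ range (k - 1), (m + n - 1 - 2 * t) :=
        (sum_range_sub_sub_two_mul _ _ (by omega)).symm
    _ ≤ ∑ t ∈ range (k - 1), #(rankCells m n A t) :=
        sum_le_sum fun t ht => hS.card_rankCells_ge hA hm hn (by rw [mem_range] at ht; omega)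
    _ ≤ onesCount m n A := sum_card_rankCells_le m n A _

end IsSaturated

theorem stmt_8_general (m n k : ℕ) (hm : k ≤ m) (hn : k ≤ n)
    (A : ℕ → ℕ → Bool) (hA : AvoidId m n k A)
    (hcard : onesCount m n A < (k - 1) * (m + n - (k - 1))) :
    ∃ i j : ℕ, 1 ≤ i ∧ i ≤ m ∧ 1 ≤ j ∧ j ≤ n ∧ A i j = false ∧
      AvoidId m n k (setOne A i j) := by
  by_contra hne
  push Not at hne
  exact (IsSaturated.le_onesCount hA hne hm hn).not_gt hcard

theorem stmt_8 (m n k : ℕ) (hk : 3 ≤ k) (hm : k ≤ m) (hn : k ≤ n)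
    (A : ℕ → ℕ → Bool) (hA : AvoidId m n k A)
    (hcard : onesCount m n A < (k - 1) * (m + n - (k - 1))) :
    ∃ i j : ℕ, 1 ≤ i ∧ i ≤ m ∧ 1 ≤ j ∧ j ≤ n ∧ A i j = false ∧
      AvoidId m n k (setOne A i j) :=
  stmt_8_general m n k hm hn A hA hcard
end

section
/- Let m, n, k be integers with m, n ≥ k ≥ 3. Every maximal 12⋯k-avoiding m×n (0,1)-matrix has exactly (k−1)(m + n − (k−1)) ones; in particular, all maximal 12⋯k-avoiding m×n (0,1)-matrices have the same number of 1's. -/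
/-- `A` is maximal `12⋯k`-avoiding. -/
def MaximalAvoidId (m n k : ℕ) (A : ℕ → ℕ → Bool) : Prop :=
  AvoidId m n k A ∧
    ∀ i j : ℕ, 1 ≤ i → i ≤ m → 1 ≤ j → j ≤ n → A i j = false →
      ¬ AvoidId m n k (setOne A i j)

open Finset

def onesNW (A : ℕ → ℕ → Bool) (i j : ℕ) : Finset (ℕ × ℕ) :=
  (Ico 1 i ×ˢ Ico 1 j).filter fun p => A p.1 p.2 = true

lemma mem_onesNW {A : ℕ → ℕ → Bool} {i j : ℕ} {p : ℕ × ℕ} :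
    p ∈ onesNW A i j ↔ (1 ≤ p.1 ∧ p.1 < i) ∧ (1 ≤ p.2 ∧ p.2 < j) ∧ A p.1 p.2 = true := by
  simp [onesNW, and_assoc]

/-- At a one, the length of a longest increasing chain of ones ending there. -/
def nwRank (A : ℕ → ℕ → Bool) (i j : ℕ) : ℕ :=
  1 + (onesNW A i j).attach.sup fun p => nwRank A p.1.1 p.1.2
termination_by i
decreasing_by exact (mem_onesNW.mp p.2).1.2

section nwRank

variable {A : ℕ → ℕ → Bool} {i j : ℕ}

lemma nwRank_eq (A : ℕ → ℕ → Bool) (i j : ℕ) :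
    nwRank A i j = 1 + (onesNW A i j).sup fun p => nwRank A p.1 p.2 := by
  rw [nwRank, sup_attach (onesNW A i j) fun p => nwRank A p.1 p.2]

lemma one_le_nwRank (A : ℕ → ℕ → Bool) (i j : ℕ) : 1 ≤ nwRank A i j := by
  rw [nwRank_eq]; omega

lemma nwRank_lt_of_eq_true {a b : ℕ} (h : A a b = true) (ha : 1 ≤ a) (hai : a < i)
    (hb : 1 ≤ b) (hbj : b < j) : nwRank A a b < nwRank A i j := by
  have : nwRank A a b ≤ (onesNW A i j).sup fun p => nwRank A p.1 p.2 :=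
    Finset.le_sup (f := fun p => nwRank A p.1 p.2) (b := (a, b))
      (mem_onesNW.mpr ⟨⟨ha, hai⟩, ⟨hb, hbj⟩, h⟩)
  rw [nwRank_eq A i j]; omega

lemma nwRank_mono {i' j' : ℕ} (hi : i ≤ i') (hj : j ≤ j') : nwRank A i j ≤ nwRank A i' j' := by
  have hsub : onesNW A i j ⊆ onesNW A i' j' := fun p hp => by
    rw [mem_onesNW] at hp ⊢
    exact ⟨⟨hp.1.1, by omega⟩, ⟨hp.2.1.1, by omega⟩, hp.2.2⟩
  rw [nwRank_eq, nwRank_eq]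
  exact Nat.add_le_add_left (sup_mono hsub) 1

lemma nwRank_le_of_forall {t : ℕ} (h : ∀ p ∈ onesNW A i j, nwRank A p.1 p.2 ≤ t) :
    nwRank A i j ≤ t + 1 := by
  rw [nwRank_eq, add_comm]
  exact Nat.add_le_add_right (Finset.sup_le h) 1

lemma exists_nwRank_add_one_eq (h : 2 ≤ nwRank A i j) :
    ∃ p ∈ onesNW A i j, nwRank A p.1 p.2 + 1 = nwRank A i j := by
  rw [nwRank_eq] at h ⊢
  obtain ⟨p, hp, hsup⟩ := exists_mem_eq_sup (onesNW A i j)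
    (nonempty_iff_ne_empty.mpr fun he => by simp [he] at h) fun p => nwRank A p.1 p.2
  exact ⟨p, hp, by rw [hsup]; omega⟩

lemma nwRank_le_min (A : ℕ → ℕ → Bool) (hi : 1 ≤ i) (hj : 1 ≤ j) :
    nwRank A i j ≤ min i j := by
  induction i using Nat.strong_induction_on generalizing j with
  | _ i ih =>
    refine (nwRank_le_of_forall (t := min i j - 1) fun p hp => ?_).trans (by omega)
    rw [mem_onesNW] at hp
    have := ih p.1 hp.1.2 hp.1.1 hp.2.1.1
    omega

lemma nwRank_congr {B : ℕ → ℕ → Bool} (h : ∀ a b, a < i → b < j → A a b = B a b) :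
    nwRank A i j = nwRank B i j := by
  induction i using Nat.strong_induction_on generalizing j with
  | _ i ih =>
    have hNW : onesNW A i j = onesNW B i j := filter_congr fun p hp => by
      rw [mem_product, mem_Ico, mem_Ico] at hp
      rw [h _ _ hp.1.2 hp.2.2]
    rw [nwRank_eq, nwRank_eq, hNW]
    refine congrArg (1 + ·) (sup_congr rfl fun p hp => ?_)
    rw [mem_onesNW] at hp
    exact ih p.1 hp.1.2 fun a b ha hb => h a b (by omega) (by omega)

lemma nwRank_setOne_self : nwRank (setOne A i j) i j = nwRank A i j :=
  nwRank_congr fun a b ha _ => by simp [setOne, ha.ne]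

end nwRank

/-- The half-turn `(a, b) ↦ (m + 1 - a, n + 1 - b)` of the `m × n` grid exchanges north-west
and south-east. -/
def seRank (m n : ℕ) (A : ℕ → ℕ → Bool) (i j : ℕ) : ℕ :=
  nwRank (fun a b => A (m + 1 - a) (n + 1 - b)) (m + 1 - i) (n + 1 - j)

section seRank

variable {m n : ℕ} {A : ℕ → ℕ → Bool} {i j : ℕ}

lemma one_le_seRank (m n : ℕ) (A : ℕ → ℕ → Bool) (i j : ℕ) : 1 ≤ seRank m n A i j :=
  one_le_nwRank _ _ _

lemma seRank_anti {i' j' : ℕ} (hi : i ≤ i') (hj : j ≤ j') :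
    seRank m n A i' j' ≤ seRank m n A i j :=
  nwRank_mono (by omega) (by omega)

lemma seRank_le_min (hi : i ≤ m) (hj : j ≤ n) : seRank m n A i j ≤ min (m + 1 - i) (n + 1 - j) :=
  nwRank_le_min _ (by omega) (by omega)

lemma seRank_lt_of_eq_true {a b : ℕ} (h : A a b = true) (hia : i < a) (ham : a ≤ m)
    (hjb : j < b) (hbn : b ≤ n) : seRank m n A a b < seRank m n A i j := by
  refine nwRank_lt_of_eq_true ?_ (by omega) (by omega) (by omega) (by omega)
  rwa [Nat.sub_sub_self (by omega : a ≤ m + 1), Nat.sub_sub_self (by omega : b ≤ n + 1)]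

lemma exists_seRank_add_one_eq (h : 2 ≤ seRank m n A i j) :
    ∃ a b, (i < a ∧ a ≤ m) ∧ (j < b ∧ b ≤ n) ∧ A a b = true ∧
      seRank m n A a b + 1 = seRank m n A i j := by
  obtain ⟨⟨a', b'⟩, hp, hrank⟩ := exists_nwRank_add_one_eq h
  rw [mem_onesNW] at hp
  obtain ⟨⟨ha1, hai⟩, ⟨hb1, hbj⟩, hone⟩ := hp
  refine ⟨m + 1 - a', n + 1 - b', ⟨by omega, by omega⟩, ⟨by omega, by omega⟩, hone, ?_⟩
  rwa [seRank, Nat.sub_sub_self (by omega : a' ≤ m + 1), Nat.sub_sub_self (by omega : b' ≤ n + 1)]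

lemma seRank_setOne_self : seRank m n (setOne A i j) i j = seRank m n A i j :=
  nwRank_congr fun a b ha _ => by simp [setOne, show m + 1 - a ≠ i by omega]

end seRank

section Chains

variable {m n k : ℕ} {A : ℕ → ℕ → Bool} {i j : ℕ}

lemma exists_chain_of_lt_nwRank :
    ∀ {s i j : ℕ}, 1 ≤ i → 1 ≤ j → A i j = true → s < nwRank A i j →
      ∃ r c : ℕ → ℕ, (∀ t < s, r t < r (t + 1) ∧ c t < c (t + 1)) ∧
        (∀ t ≤ s, (1 ≤ r t ∧ r t ≤ i) ∧ (1 ≤ c t ∧ c t ≤ j)) ∧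
        (∀ t ≤ s, A (r t) (c t) = true)
  | 0, i, j, hi, hj, hij, _ =>
    ⟨fun _ => i, fun _ => j, by omega, fun _ _ => ⟨⟨hi, le_rfl⟩, hj, le_rfl⟩, fun _ _ => hij⟩
  | s + 1, i, j, _, _, hij, hs => by
    obtain ⟨p, hp, hrank⟩ := exists_nwRank_add_one_eq (A := A) (i := i) (j := j) (by omega)
    obtain ⟨⟨hp1, hpi⟩, ⟨hp2, hpj⟩, hp⟩ := mem_onesNW.mp hp
    obtain ⟨r, c, hinc, hbd, hone⟩ := exists_chain_of_lt_nwRank (s := s) hp1 hp2 hp (by omega)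
    refine ⟨fun t => if t ≤ s then r t else i, fun t => if t ≤ s then c t else j,
      fun t ht => ?_, fun t ht => ?_, fun t ht => ?_⟩ <;> dsimp only
    · by_cases hts : t + 1 ≤ s
      · simp only [if_pos hts, if_pos (by omega : t ≤ s)]
        exact hinc t hts
      · have := hbd t (by omega)
        simp only [if_pos (by omega : t ≤ s), if_neg hts]
        omega
    · split_ifs with hts
      · have := hbd t hts
        omega
      · omega
    · split_ifs with hts
      · exact hone t hts
      · exact hij

lemma AvoidId.nwRank_lt (hAv : AvoidId m n k A) (hi : 1 ≤ i) (him : i ≤ m) (hj : 1 ≤ j)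
    (hjn : j ≤ n) (hij : A i j = true) : nwRank A i j < k := by
  by_contra! hk
  obtain ⟨r, c, hinc, hbd, hone⟩ :=
    exists_chain_of_lt_nwRank (s := k - 1) hi hj hij (by have := one_le_nwRank A i j; omega)
  refine hAv ⟨r, c, fun t ht => hinc t (by omega), fun t ht => ?_, fun t ht => hone t (by omega)⟩
  have := hbd t (by omega)
  omega

lemma le_nwRank_of_chain {r c : ℕ → ℕ} :
    ∀ {t : ℕ}, (∀ s < t, r s < r (s + 1) ∧ c s < c (s + 1)) →
      (∀ s < t, 1 ≤ r s ∧ 1 ≤ c s ∧ A (r s) (c s) = true) → t + 1 ≤ nwRank A (r t) (c t)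
  | 0, _, _ => one_le_nwRank A _ _
  | t + 1, hinc, hone => by
    have ih := le_nwRank_of_chain (t := t) (fun s hs => hinc s (by omega))
      (fun s hs => hone s (by omega))
    obtain ⟨hr, hc, hrc⟩ := hone t (by omega)
    have := nwRank_lt_of_eq_true hrc hr (hinc t (by omega)).1 hc (hinc t (by omega)).2
    omega

lemma le_seRank_of_chain {r c : ℕ → ℕ} :
    ∀ {t q : ℕ}, (∀ s, t ≤ s → s < t + q → r s < r (s + 1) ∧ c s < c (s + 1)) →
      (∀ s, t < s → s ≤ t + q → r s ≤ m ∧ c s ≤ n ∧ A (r s) (c s) = true) →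
      q + 1 ≤ seRank m n A (r t) (c t)
  | _, 0, _, _ => one_le_seRank m n A _ _
  | t, q + 1, hinc, hone => by
    have ih := le_seRank_of_chain (t := t + 1) (q := q)
      (fun s h1 h2 => hinc s (by omega) (by omega)) (fun s h1 h2 => hone s (by omega) (by omega))
    obtain ⟨hr, hc, hrc⟩ := hone (t + 1) (by omega) (by omega)
    have := seRank_lt_of_eq_true hrc (hinc t le_rfl (by omega)).1 hr
      (hinc t le_rfl (by omega)).2 hc
    omega

lemma exists_nwRank_add_le_of_lt_seRank :
    ∀ {b i j : ℕ}, (1 ≤ i ∧ i ≤ m) → (1 ≤ j ∧ j ≤ n) → A i j = true → b < seRank m n A i j →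
      ∃ p q, (1 ≤ p ∧ p ≤ m) ∧ (1 ≤ q ∧ q ≤ n) ∧ A p q = true ∧
        nwRank A i j + b ≤ nwRank A p q
  | 0, i, j, hi, hj, hij, _ => ⟨i, j, hi, hj, hij, le_rfl⟩
  | b + 1, i, j, hi, hj, hij, hb => by
    obtain ⟨a, c, hia, hjc, hac, hrank⟩ :=
      exists_seRank_add_one_eq (m := m) (n := n) (A := A) (i := i) (j := j) (by omega)
    obtain ⟨p, q, hp, hq, hpq, hle⟩ :=
      exists_nwRank_add_le_of_lt_seRank (b := b) (by omega) (by omega) hac (by omega)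
    have := nwRank_lt_of_eq_true (A := A) hij hi.1 hia.1 hj.1 hjc.1
    exact ⟨p, q, hp, hq, hpq, by omega⟩

lemma AvoidId.nwRank_add_seRank_le (hAv : AvoidId m n k A) (hi : 1 ≤ i ∧ i ≤ m)
    (hj : 1 ≤ j ∧ j ≤ n) (hij : A i j = true) : nwRank A i j + seRank m n A i j ≤ k := by
  obtain ⟨p, q, hp, hq, hpq, hle⟩ := exists_nwRank_add_le_of_lt_seRank
    (b := seRank m n A i j - 1) hi hj hij (by have := one_le_seRank m n A i j; omega)
  have := hAv.nwRank_lt hp.1 hp.2 hq.1 hq.2 hpq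
  have := one_le_seRank m n A i j
  omega

lemma MaximalAvoidId.eq_true_of_nwRank_add_seRank_le (hA : MaximalAvoidId m n k A)
    (hi : 1 ≤ i ∧ i ≤ m) (hj : 1 ≤ j ∧ j ≤ n) (hrank : nwRank A i j + seRank m n A i j ≤ k) :
    A i j = true := by
  by_contra hij
  -- Setting `(i, j)` to one creates a `k`-chain through `(i, j)`, and neither rank at `(i, j)`
  -- depends on that entry.
  obtain ⟨r, c, hinc, hbd, hone⟩ :=
    not_not.mp (hA.2 i j hi.1 hi.2 hj.1 hj.2 (eq_false_of_ne_true hij))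
  obtain ⟨t, ht, rfl, rfl⟩ : ∃ t < k, r t = i ∧ c t = j := by
    by_contra! hne
    refine hA.1 ⟨r, c, hinc, hbd, fun s hs => ?_⟩
    have hrc := hone s hs
    simp only [setOne] at hrc
    rwa [if_neg fun h => hne s hs h.1 h.2] at hrc
  have hu := le_nwRank_of_chain (A := setOne A (r t) (c t)) (t := t)
    (fun s hs => hinc s (by omega))
    (fun s hs => ⟨(hbd s (by omega)).1, (hbd s (by omega)).2.2.1, hone s (by omega)⟩)
  have hd := le_seRank_of_chain (m := m) (n := n) (A := setOne A (r t) (c t)) (t := t)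
    (q := k - 1 - t) (fun s _ hs => hinc s (by omega))
    (fun s _ hs => ⟨(hbd s (by omega)).2.1, (hbd s (by omega)).2.2.2, hone s (by omega)⟩)
  rw [nwRank_setOne_self] at hu
  rw [seRank_setOne_self] at hd
  omega

end Chains

def layer (n : ℕ) (A : ℕ → ℕ → Bool) (ℓ i : ℕ) : Finset ℕ :=
  (Icc 1 n).filter fun j => A i j = true ∧ nwRank A i j = ℓ

section Layers

variable {m n k : ℕ} {A : ℕ → ℕ → Bool} {ℓ i j : ℕ}

lemma mem_layer :
    j ∈ layer n A ℓ i ↔ (1 ≤ j ∧ j ≤ n) ∧ A i j = true ∧ nwRank A i j = ℓ := by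
  rw [layer, mem_filter, mem_Icc]

lemma le_min_of_mem_layer (h : j ∈ layer n A ℓ i) (hi : 1 ≤ i) : ℓ ≤ min i j := by
  obtain ⟨⟨hj, -⟩, -, rfl⟩ := mem_layer.mp h
  exact nwRank_le_min A hi hj

lemma MaximalAvoidId.eq_true_of_le_of_nwRank_le (hA : MaximalAvoidId m n k A)
    (hij : A i j = true) (hi : 1 ≤ i) (hj : 1 ≤ j) {i' j' : ℕ} (hii' : i ≤ i') (hjj' : j ≤ j')
    (hi'm : i' ≤ m) (hj'n : j' ≤ n) (hrank : nwRank A i' j' ≤ nwRank A i j) :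
    A i' j' = true := by
  refine hA.eq_true_of_nwRank_add_seRank_le ⟨by omega, hi'm⟩ ⟨by omega, hj'n⟩ ?_
  have := hA.1.nwRank_add_seRank_le ⟨hi, by omega⟩ ⟨hj, by omega⟩ hij
  have := seRank_anti (m := m) (n := n) (A := A) hii' hjj'
  omega

/-- Each cell of the diagonal of length `ℓ` ending at `(i, j)` has `nwRank + seRank ≤ ℓ + 1`,
so it is a one. -/
lemma MaximalAvoidId.mem_layer_of_diagonal (hA : MaximalAvoidId m n k A) (hℓ : 1 ≤ ℓ)
    (hℓk : ℓ < k) (hi : ℓ ≤ i ∧ i ≤ m) (hj : ℓ ≤ j ∧ j ≤ n) (hstart : i = ℓ ∨ j = ℓ)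
    (hend : i = m ∨ j = n) : j ∈ layer n A ℓ i := by
  have hone : ∀ t, 1 ≤ t → t ≤ ℓ → A (i - ℓ + t) (j - ℓ + t) = true := fun t h1 h2 =>
    hA.eq_true_of_nwRank_add_seRank_le ⟨by omega, by omega⟩ ⟨by omega, by omega⟩ (by
      have := nwRank_le_min A (i := i - ℓ + t) (j := j - ℓ + t) (by omega) (by omega)
      have := seRank_le_min (m := m) (n := n) (A := A) (i := i - ℓ + t) (j := j - ℓ + t)
        (by omega) (by omega)
      omega)
  have hlow := le_nwRank_of_chain (A := A) (r := fun s => i - ℓ + (s + 1))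
    (c := fun s => j - ℓ + (s + 1)) (t := ℓ - 1) (fun s _ => ⟨by omega, by omega⟩)
    (fun s _ => ⟨by omega, by omega, hone (s + 1) (by omega) (by omega)⟩)
  have hij : i - ℓ + (ℓ - 1 + 1) = i ∧ j - ℓ + (ℓ - 1 + 1) = j := by omega
  simp only [hij.1, hij.2] at hlow
  have := nwRank_le_min A (i := i) (j := j) (by omega) (by omega)
  refine mem_layer.mpr ⟨⟨by omega, hj.2⟩, ?_, by omega⟩
  simpa [show i - ℓ + ℓ = i by omega, show j - ℓ + ℓ = j by omega] using hone ℓ hℓ le_rfl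

lemma mem_layer_antichain {i' j' : ℕ} (h : j ∈ layer n A ℓ i) (h' : j' ∈ layer n A ℓ i')
    (hi : 1 ≤ i) (hii' : i < i') : j' ≤ j := by
  obtain ⟨⟨hj, -⟩, hij, rfl⟩ := mem_layer.mp h
  obtain ⟨-, -, hrank⟩ := mem_layer.mp h'
  by_contra! hjj'
  exact (nwRank_lt_of_eq_true hij hi hii' hj hjj').ne' hrank

lemma MaximalAvoidId.min'_mem_layer_succ (hA : MaximalAvoidId m n k A) (hi : 1 ≤ i)
    (him : i < m) (hne : (layer n A ℓ i).Nonempty) :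
    (layer n A ℓ i).min' hne ∈ layer n A ℓ (i + 1) := by
  obtain ⟨⟨hj₀, hj₀n⟩, hone, hrank⟩ := mem_layer.mp (min'_mem _ hne)
  set j₀ := (layer n A ℓ i).min' hne
  have hle : nwRank A (i + 1) j₀ ≤ ℓ := by
    have := one_le_nwRank A i j₀
    refine (nwRank_le_of_forall (t := ℓ - 1) fun p hp => ?_).trans (by omega)
    obtain ⟨⟨hp1, hpi⟩, ⟨hp2, hpj⟩, hpA⟩ := mem_onesNW.mp hp
    rcases (Nat.lt_succ_iff.mp hpi).lt_or_eq with hpi | hpi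
    · have := nwRank_lt_of_eq_true hpA hp1 hpi hp2 hpj
      omega
    · rw [hpi] at hpA ⊢
      have hmono : nwRank A i p.2 ≤ ℓ := hrank ▸ nwRank_mono le_rfl hpj.le
      have hne' : nwRank A i p.2 ≠ ℓ := fun h =>
        (min'_le _ _ (mem_layer.mpr ⟨⟨hp2, by omega⟩, hpA, h⟩)).not_gt hpj
      omega
  have hge : ℓ ≤ nwRank A (i + 1) j₀ := hrank ▸ nwRank_mono (Nat.le_succ i) le_rfl
  exact mem_layer.mpr ⟨⟨hj₀, hj₀n⟩,
    hA.eq_true_of_le_of_nwRank_le hone hi hj₀ (Nat.le_succ i) le_rfl him hj₀n (by omega),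
    by omega⟩

lemma MaximalAvoidId.layer_eq_Icc (hA : MaximalAvoidId m n k A) (hi : 1 ≤ i) (him : i ≤ m)
    (hne : (layer n A ℓ i).Nonempty) :
    layer n A ℓ i = Icc ((layer n A ℓ i).min' hne) ((layer n A ℓ i).sup id) := by
  obtain ⟨⟨hj₀, -⟩, hone, hrank⟩ := mem_layer.mp (min'_mem _ hne)
  obtain ⟨⟨-, hj₁n⟩, -, hrank₁⟩ := mem_layer.mp (max'_mem _ hne)
  rw [max'_eq_sup', sup'_eq_sup] at hj₁n hrank₁
  ext j
  refine ⟨fun hj => mem_Icc.mpr ⟨min'_le _ _ hj, le_sup (f := id) hj⟩, fun hj => ?_⟩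
  obtain ⟨hlo, hhi⟩ := mem_Icc.mp hj
  have h₀ := nwRank_mono (A := A) (le_refl i) hlo
  have h₁ := nwRank_mono (A := A) (le_refl i) hhi
  exact mem_layer.mpr ⟨⟨by omega, by omega⟩,
    hA.eq_true_of_le_of_nwRank_le hone hi hj₀ le_rfl hlo him (by omega) (by omega), by omega⟩

lemma MaximalAvoidId.layer_nonempty (hA : MaximalAvoidId m n k A) (hℓ : 1 ≤ ℓ) (hℓk : ℓ < k)
    (hℓn : ℓ ≤ n) (hi : ℓ ≤ i) (him : i ≤ m) : (layer n A ℓ i).Nonempty := by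
  induction i, hi using Nat.le_induction with
  | base => exact ⟨n, hA.mem_layer_of_diagonal hℓ hℓk ⟨le_rfl, him⟩ ⟨hℓn, le_rfl⟩
      (Or.inl rfl) (Or.inr rfl)⟩
  | succ i hi ih => exact ⟨_, hA.min'_mem_layer_succ (by omega) him (ih (by omega))⟩

lemma MaximalAvoidId.layer_eq_Icc_sup_succ (hA : MaximalAvoidId m n k A) (hℓ : 1 ≤ ℓ)
    (hℓk : ℓ < k) (hℓn : ℓ ≤ n) (hi : ℓ ≤ i) (him : i < m) :
    layer n A ℓ i = Icc ((layer n A ℓ (i + 1)).sup id) ((layer n A ℓ i).sup id) := by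
  have hne := hA.layer_nonempty hℓ hℓk hℓn hi him.le
  have hsup : (layer n A ℓ (i + 1)).sup id = (layer n A ℓ i).min' hne :=
    le_antisymm
      (Finset.sup_le fun _ hq => mem_layer_antichain (min'_mem _ hne) hq (by omega) i.lt_succ_self)
      (le_sup (f := id) (hA.min'_mem_layer_succ (by omega) him hne))
  rw [hsup]
  exact hA.layer_eq_Icc (by omega) him.le hne

lemma MaximalAvoidId.layer_last_eq_Icc (hA : MaximalAvoidId m n k A) (hℓ : 1 ≤ ℓ) (hℓk : ℓ < k)
    (hℓm : ℓ ≤ m) (hℓn : ℓ ≤ n) : layer n A ℓ m = Icc ℓ ((layer n A ℓ m).sup id) := by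
  have hne := hA.layer_nonempty hℓ hℓk hℓn hℓm le_rfl
  have hmin : (layer n A ℓ m).min' hne = ℓ :=
    le_antisymm
      (min'_le _ _ (hA.mem_layer_of_diagonal hℓ hℓk ⟨hℓm, le_rfl⟩ ⟨le_rfl, hℓn⟩
        (Or.inr rfl) (Or.inl rfl)))
      ((le_min_of_mem_layer (min'_mem _ hne) (by omega)).trans (min_le_right _ _))
  have h := hA.layer_eq_Icc (by omega) le_rfl hne
  rwa [hmin] at h

lemma MaximalAvoidId.sup_layer_self (hA : MaximalAvoidId m n k A) (hℓ : 1 ≤ ℓ) (hℓk : ℓ < k)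
    (hℓm : ℓ ≤ m) (hℓn : ℓ ≤ n) : (layer n A ℓ ℓ).sup id = n :=
  le_antisymm (Finset.sup_le fun _ hj => (mem_layer.mp hj).1.2)
    (le_sup (f := id) (hA.mem_layer_of_diagonal hℓ hℓk ⟨le_rfl, hℓm⟩ ⟨hℓn, le_rfl⟩
      (Or.inl rfl) (Or.inr rfl)))

lemma MaximalAvoidId.sum_card_layer_Icc (hA : MaximalAvoidId m n k A) (hℓ : 1 ≤ ℓ) (hℓk : ℓ < k)
    (hℓn : ℓ ≤ n) (hi : ℓ ≤ i) (him : i ≤ m) :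
    ∑ i' ∈ Icc i m, #(layer n A ℓ i') + ℓ = (layer n A ℓ i).sup id + (m - i) + 1 := by
  induction him using Nat.decreasingInduction with
  | self =>
    have hpos := (hA.layer_nonempty hℓ hℓk hℓn hi le_rfl).card_pos
    have hcard : #(layer n A ℓ m) = (layer n A ℓ m).sup id + 1 - ℓ :=
      (congrArg card (hA.layer_last_eq_Icc hℓ hℓk hi hℓn)).trans (Nat.card_Icc _ _)
    rw [Icc_self, sum_singleton]
    omega
  | of_succ i him ih =>
    have hpos := (hA.layer_nonempty hℓ hℓk hℓn hi him.le).card_pos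
    have hcard : #(layer n A ℓ i) = (layer n A ℓ i).sup id + 1 - (layer n A ℓ (i + 1)).sup id :=
      (congrArg card (hA.layer_eq_Icc_sup_succ hℓ hℓk hℓn hi him)).trans (Nat.card_Icc _ _)
    rw [← insert_Icc_add_one_left_eq_Icc him.le, sum_insert (by simp)]
    have := ih (by omega)
    omega

lemma MaximalAvoidId.sum_card_layer (hA : MaximalAvoidId m n k A) (hℓ : 1 ≤ ℓ) (hℓk : ℓ < k)
    (hℓm : ℓ ≤ m) (hℓn : ℓ ≤ n) : ∑ i ∈ Icc 1 m, #(layer n A ℓ i) = m + n + 1 - 2 * ℓ := by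
  have hzero : ∀ i ∈ Icc 1 m, i ∉ Icc ℓ m → #(layer n A ℓ i) = 0 := fun i hi hi' => by
    rw [mem_Icc] at hi hi'
    refine card_eq_zero.mpr (eq_empty_iff_forall_notMem.mpr fun j hj => ?_)
    have := le_min_of_mem_layer hj hi.1
    omega
  rw [← sum_subset (Icc_subset_Icc_left hℓ) hzero]
  have := hA.sum_card_layer_Icc hℓ hℓk hℓn le_rfl hℓm
  rw [hA.sup_layer_self hℓ hℓk hℓm hℓn] at this
  omega

end Layers

lemma AvoidId.onesCount_eq_sum_card_layer {m n k : ℕ} {A : ℕ → ℕ → Bool}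
    (hAv : AvoidId m n k A) :
    onesCount m n A = ∑ ℓ ∈ Icc 1 (k - 1), ∑ i ∈ Icc 1 m, #(layer n A ℓ i) := by
  rw [onesCount, card_eq_sum_card_fiberwise (f := fun p => nwRank A p.1 p.2) fun p hp => ?_]
  · refine sum_congr rfl fun ℓ _ => ?_
    rw [filter_filter, card_filter, sum_product]
    exact sum_congr rfl fun i _ => by rw [layer, card_filter]
  · simp only [coe_filter, mem_product, mem_Icc] at hp
    have := hAv.nwRank_lt hp.1.1.1 hp.1.1.2 hp.1.2.1 hp.1.2.2 hp.2
    have := one_le_nwRank A p.1 p.2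
    simp only [coe_Icc, Set.mem_Icc]
    omega

lemma sum_Icc_sub_two_mul {N : ℕ} : ∀ {K : ℕ}, 2 * K ≤ N + 1 →
    ∑ ℓ ∈ Icc 1 K, (N + 1 - 2 * ℓ) = K * (N - K)
  | 0, _ => by simp
  | K + 1, hK => by
    rw [sum_Icc_succ_top (by omega), sum_Icc_sub_two_mul (by omega)]
    obtain ⟨c, rfl⟩ : ∃ c, N = 2 * K + 1 + c := ⟨N - (2 * K + 1), by omega⟩
    rw [show 2 * K + 1 + c - K = K + 1 + c by omega, show 2 * K + 1 + c - (K + 1) = K + c by omega,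
      show 2 * K + 1 + c + 1 - 2 * (K + 1) = c by omega]
    ring

theorem stmt_9_general (m n k : ℕ) (hm : k ≤ m) (hn : k ≤ n)
    (A : ℕ → ℕ → Bool) (hA : MaximalAvoidId m n k A) :
    onesCount m n A = (k - 1) * (m + n - (k - 1)) := by
  rw [hA.1.onesCount_eq_sum_card_layer, ← sum_Icc_sub_two_mul (N := m + n) (by omega)]
  refine sum_congr rfl fun ℓ hℓ => ?_
  rw [mem_Icc] at hℓ
  exact hA.sum_card_layer hℓ.1 (by omega) (by omega) (by omega)

theorem stmt_9 (m n k : ℕ) (hk : 3 ≤ k) (hm : k ≤ m) (hn : k ≤ n)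
    (A : ℕ → ℕ → Bool) (hA : MaximalAvoidId m n k A) :
    onesCount m n A = (k - 1) * (m + n - (k - 1)) :=
  stmt_9_general m n k hm hn A hA
end

section
/- Let m, n ≥ 3. Any two maximal 312-avoiding m×n (0,1)-matrices contain the same number of 1's. -/
/-- `A` is 312-avoiding. -/
def Avoid312 (m n : ℕ) (A : ℕ → ℕ → Bool) : Prop :=
  ¬ ∃ r₁ r₂ r₃ c₁ c₂ c₃ : ℕ,
    1 ≤ r₁ ∧ r₁ < r₂ ∧ r₂ < r₃ ∧ r₃ ≤ m ∧
    1 ≤ c₁ ∧ c₁ < c₂ ∧ c₂ < c₃ ∧ c₃ ≤ n ∧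
    A r₁ c₃ = true ∧ A r₂ c₁ = true ∧ A r₃ c₂ = true

/-- `A` is maximal 312-avoiding. -/
def MaximalAvoid312 (m n : ℕ) (A : ℕ → ℕ → Bool) : Prop :=
  Avoid312 m n A ∧
    ∀ i j : ℕ, 1 ≤ i → i ≤ m → 1 ≤ j → j ≤ n → A i j = false →
      ¬ Avoid312 m n (setOne A i j)

/-!
A maximal 312-avoiding `m × n` matrix with `m, n ≥ 2` has exactly `2m + 2n - 4` ones, by induction
on `m + n`. If `m = 2` or `n = 2` no pattern fits, so the matrix is all ones.
Otherwise the entries `(1,1)` and `(1,2)` are forced to be `1`. If `A 1 3 = 0`, row 1 is `1 1 0 ⋯ 0`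
and deleting it leaves a maximal `(m-1) × n` matrix. If `A 1 3 = 1`, then below row 1 no `1` of
column 1 lies above a `1` of column 2 (it would complete a 312 with `(1,3)`), so replacing columns
1 and 2 by their entrywise `or` gives a maximal `m × (n-1)` matrix. It loses exactly two ones: in
row 1 and in the first row `p ≥ 2` with a `1` in column 1.
-/

open Finset

def IsPattern312 (m n : ℕ) (A : ℕ → ℕ → Bool) (r₁ r₂ r₃ c₁ c₂ c₃ : ℕ) : Prop :=
  1 ≤ r₁ ∧ r₁ < r₂ ∧ r₂ < r₃ ∧ r₃ ≤ m ∧ 1 ≤ c₁ ∧ c₁ < c₂ ∧ c₂ < c₃ ∧ c₃ ≤ n ∧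
    A r₁ c₃ = true ∧ A r₂ c₁ = true ∧ A r₃ c₂ = true

def dropFirstRow (A : ℕ → ℕ → Bool) : ℕ → ℕ → Bool :=
  fun i j => A (i + 1) j

-- Column `0` lies outside the matrix; keeping it unchanged makes `setOne` commute with merging.
def mergeFirstCols (A : ℕ → ℕ → Bool) : ℕ → ℕ → Bool :=
  fun i j => if j = 0 then A i 0 else if j = 1 then A i 1 || A i 2 else A i (j + 1)

section

variable {m n : ℕ} {A : ℕ → ℕ → Bool}

lemma not_avoid312_iff :
    ¬Avoid312 m n A ↔ ∃ r₁ r₂ r₃ c₁ c₂ c₃, IsPattern312 m n A r₁ r₂ r₃ c₁ c₂ c₃ :=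
  not_not

lemma avoid312_of_lt_three (h : m < 3 ∨ n < 3) : Avoid312 m n A := by
  rintro ⟨r₁, r₂, r₃, c₁, c₂, c₃, h₁, h₁₂, h₂₃, h₃, g₁, g₁₂, g₂₃, g₃, -⟩
  omega

lemma setOne_eq_true_iff {i j r c : ℕ} :
    setOne A i j r c = true ↔ (r = i ∧ c = j) ∨ A r c = true := by
  unfold setOne
  split_ifs with h <;> simp [h]

lemma setOne_dropFirstRow (i j : ℕ) :
    setOne (dropFirstRow A) i j = dropFirstRow (setOne A (i + 1) j) := by
  funext r c
  simp [setOne, dropFirstRow]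

lemma mergeFirstCols_one (i : ℕ) : mergeFirstCols A i 1 = (A i 1 || A i 2) := rfl

lemma mergeFirstCols_of_two_le (i : ℕ) {j : ℕ} (hj : 2 ≤ j) :
    mergeFirstCols A i j = A i (j + 1) := by
  simp only [mergeFirstCols]
  split_ifs <;> first | rfl | omega

lemma setOne_mergeFirstCols (i : ℕ) {j : ℕ} (hj : 1 ≤ j) :
    setOne (mergeFirstCols A) i j = mergeFirstCols (setOne A i (j + 1)) := by
  funext r c
  simp only [setOne, mergeFirstCols]
  split_ifs <;> grind

lemma setOne_mergeFirstCols_one (i : ℕ) :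
    setOne (mergeFirstCols A) i 1 = mergeFirstCols (setOne A i 1) := by
  funext r c
  simp only [setOne, mergeFirstCols]
  split_ifs <;> grind

lemma IsPattern312.of_dropFirstRow {r₁ r₂ r₃ c₁ c₂ c₃ : ℕ}
    (h : IsPattern312 m n (dropFirstRow A) r₁ r₂ r₃ c₁ c₂ c₃) :
    IsPattern312 (m + 1) n A (r₁ + 1) (r₂ + 1) (r₃ + 1) c₁ c₂ c₃ := by
  obtain ⟨h₁, h₁₂, h₂₃, h₃, hc⟩ := h
  exact ⟨by omega, by omega, by omega, by omega, hc⟩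

lemma IsPattern312.not_avoid312_dropFirstRow {r₁ r₂ r₃ c₁ c₂ c₃ : ℕ}
    (h : IsPattern312 (m + 1) n A r₁ r₂ r₃ c₁ c₂ c₃) (hr₁ : 2 ≤ r₁) :
    ¬Avoid312 m n (dropFirstRow A) := by
  obtain ⟨h₁, h₁₂, h₂₃, h₃, hc⟩ := h
  obtain ⟨r₁, rfl⟩ : ∃ r, r₁ = r + 1 := ⟨r₁ - 1, by omega⟩
  obtain ⟨r₂, rfl⟩ : ∃ r, r₂ = r + 1 := ⟨r₂ - 1, by omega⟩
  obtain ⟨r₃, rfl⟩ : ∃ r, r₃ = r + 1 := ⟨r₃ - 1, by omega⟩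
  exact not_avoid312_iff.2 ⟨r₁, r₂, r₃, c₁, c₂, c₃, by omega, by omega, by omega, by omega, hc⟩

lemma avoid312_dropFirstRow (h : Avoid312 (m + 1) n A) : Avoid312 m n (dropFirstRow A) := by
  rintro ⟨r₁, r₂, r₃, c₁, c₂, c₃, hP⟩
  exact h ⟨_, _, _, _, _, _, IsPattern312.of_dropFirstRow hP⟩

lemma IsPattern312.of_mergeFirstCols {r₁ r₂ r₃ c₁ c₂ c₃ : ℕ}
    (h : IsPattern312 m n (mergeFirstCols A) r₁ r₂ r₃ c₁ c₂ c₃) :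
    ∃ c, IsPattern312 m (n + 1) A r₁ r₂ r₃ c (c₂ + 1) (c₃ + 1) := by
  obtain ⟨h₁, h₁₂, h₂₃, h₃, hc₁, hc₁₂, hc₂₃, hc₃, e₁, e₂, e₃⟩ := h
  rw [mergeFirstCols_of_two_le _ (by omega)] at e₁ e₃
  obtain rfl | hc₁ := eq_or_lt_of_le hc₁
  · rw [mergeFirstCols_one, Bool.or_eq_true] at e₂
    obtain e₂ | e₂ := e₂
    · exact ⟨1, h₁, h₁₂, h₂₃, h₃, le_rfl, by omega, by omega, by omega, e₁, e₂, e₃⟩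
    · exact ⟨2, h₁, h₁₂, h₂₃, h₃, by omega, by omega, by omega, by omega, e₁, e₂, e₃⟩
  · rw [mergeFirstCols_of_two_le _ hc₁] at e₂
    exact ⟨c₁ + 1, h₁, h₁₂, h₂₃, h₃, by omega, by omega, by omega, by omega, e₁, e₂, e₃⟩

lemma IsPattern312.not_avoid312_mergeFirstCols {r₁ r₂ r₃ c₁ c₂ c₃ : ℕ}
    (h : IsPattern312 m (n + 1) A r₁ r₂ r₃ c₁ c₂ c₃) (hc₂ : 3 ≤ c₂) :
    ¬Avoid312 m n (mergeFirstCols A) := by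
  obtain ⟨h₁, h₁₂, h₂₃, h₃, hc₁, hc₁₂, hc₂₃, hc₃, e₁, e₂, e₃⟩ := h
  obtain ⟨c₂, rfl⟩ : ∃ c, c₂ = c + 1 := ⟨c₂ - 1, by omega⟩
  obtain ⟨c₃, rfl⟩ : ∃ c, c₃ = c + 1 := ⟨c₃ - 1, by omega⟩
  rw [← mergeFirstCols_of_two_le (A := A) r₁ (by omega : 2 ≤ c₃)] at e₁
  rw [← mergeFirstCols_of_two_le (A := A) r₃ (by omega : 2 ≤ c₂)] at e₃
  obtain ⟨c, hc, hcc₂, e₂⟩ : ∃ c, 1 ≤ c ∧ c < c₂ ∧ mergeFirstCols A r₂ c = true := by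
    obtain rfl | rfl | hc₁ : c₁ = 1 ∨ c₁ = 2 ∨ 3 ≤ c₁ := by omega
    · exact ⟨1, le_rfl, by omega, by simp [mergeFirstCols_one, e₂]⟩
    · exact ⟨1, le_rfl, by omega, by simp [mergeFirstCols_one, e₂]⟩
    · refine ⟨c₁ - 1, by omega, by omega, ?_⟩
      rwa [mergeFirstCols_of_two_le _ (by omega), Nat.sub_add_cancel (by omega)]
  exact not_avoid312_iff.2 ⟨r₁, r₂, r₃, c, c₂, c₃, h₁, h₁₂, h₂₃, h₃, hc, hcc₂, by omega, by omega,
    e₁, e₂, e₃⟩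

lemma avoid312_mergeFirstCols (h : Avoid312 m (n + 1) A) : Avoid312 m n (mergeFirstCols A) := by
  rintro ⟨r₁, r₂, r₃, c₁, c₂, c₃, hP⟩
  obtain ⟨c, hc⟩ := IsPattern312.of_mergeFirstCols hP
  exact h ⟨_, _, _, _, _, _, hc⟩

theorem MaximalAvoid312.exists_pattern_through (hA : MaximalAvoid312 m n A) {i j : ℕ}
    (hi : 1 ≤ i) (hi' : i ≤ m) (hj : 1 ≤ j) (hj' : j ≤ n) (hz : A i j = false) :
    ∃ r₁ r₂ r₃ c₁ c₂ c₃, 1 ≤ r₁ ∧ r₁ < r₂ ∧ r₂ < r₃ ∧ r₃ ≤ m ∧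
      1 ≤ c₁ ∧ c₁ < c₂ ∧ c₂ < c₃ ∧ c₃ ≤ n ∧
      ((i = r₁ ∧ j = c₃ ∧ A r₂ c₁ = true ∧ A r₃ c₂ = true) ∨
        (i = r₂ ∧ j = c₁ ∧ A r₁ c₃ = true ∧ A r₃ c₂ = true) ∨
        (i = r₃ ∧ j = c₂ ∧ A r₁ c₃ = true ∧ A r₂ c₁ = true)) := by
  obtain ⟨r₁, r₂, r₃, c₁, c₂, c₃, h₁, h₁₂, h₂₃, h₃, g₁, g₁₂, g₂₃, g₃, e₁, e₂, e₃⟩ :=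
    not_avoid312_iff.1 (hA.2 i j hi hi' hj hj' hz)
  refine ⟨r₁, r₂, r₃, c₁, c₂, c₃, h₁, h₁₂, h₂₃, h₃, g₁, g₁₂, g₂₃, g₃, ?_⟩
  rw [setOne_eq_true_iff] at e₁ e₂ e₃
  rcases e₁ with ⟨rfl, rfl⟩ | e₁
  · exact Or.inl ⟨rfl, rfl, e₂.resolve_left (by omega), e₃.resolve_left (by omega)⟩
  rcases e₂ with ⟨rfl, rfl⟩ | e₂
  · exact Or.inr (Or.inl ⟨rfl, rfl, e₁, e₃.resolve_left (by omega)⟩)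
  rcases e₃ with ⟨rfl, rfl⟩ | e₃
  · exact Or.inr (Or.inr ⟨rfl, rfl, e₁, e₂⟩)
  exact (hA.1 ⟨r₁, r₂, r₃, c₁, c₂, c₃, h₁, h₁₂, h₂₃, h₃, g₁, g₁₂, g₂₃, g₃, e₁, e₂, e₃⟩).elim

theorem MaximalAvoid312.eq_true_of_lt_three (hA : MaximalAvoid312 m n A)
    (h : m < 3 ∨ n < 3) {i j : ℕ} (hi : 1 ≤ i) (hi' : i ≤ m) (hj : 1 ≤ j) (hj' : j ≤ n) :
    A i j = true := by
  by_contra hz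
  exact hA.2 i j hi hi' hj hj' (by simpa using hz) (avoid312_of_lt_three h)

theorem MaximalAvoid312.apply_one_one (hA : MaximalAvoid312 m n A) (hm : 1 ≤ m) (hn : 1 ≤ n) :
    A 1 1 = true := by
  by_contra hz
  obtain ⟨_, _, _, _, _, _, _⟩ := hA.exists_pattern_through le_rfl hm le_rfl hn (by simpa using hz)
  omega

theorem MaximalAvoid312.apply_one_two (hA : MaximalAvoid312 m n A) (hm : 1 ≤ m) (hn : 2 ≤ n) :
    A 1 2 = true := by
  by_contra hz
  obtain ⟨_, _, _, _, _, _, _⟩ :=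
    hA.exists_pattern_through le_rfl hm (by omega) hn (by simpa using hz)
  omega

theorem MaximalAvoid312.apply_last_one (hA : MaximalAvoid312 m n A) (hm : 1 ≤ m) (hn : 1 ≤ n) :
    A m 1 = true := by
  by_contra hz
  obtain ⟨_, _, _, _, _, _, _⟩ := hA.exists_pattern_through hm le_rfl le_rfl hn (by simpa using hz)
  omega

theorem MaximalAvoid312.apply_one_eq_false (hA : MaximalAvoid312 m n A) (hm : 1 ≤ m)
    (h13 : A 1 3 = false) {c : ℕ} (hc : 3 ≤ c) (hcn : c ≤ n) : A 1 c = false := by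
  obtain ⟨r₁, r₂, r₃, c₁, c₂, c₃, h₁, h₁₂, h₂₃, h₃, g₁, g₁₂, g₂₃, g₃, hrole⟩ :=
    hA.exists_pattern_through le_rfl hm (by omega) (by omega) h13
  obtain ⟨rfl, rfl, e₂, e₃⟩ | h | h := hrole
  · obtain ⟨rfl, rfl⟩ : c₁ = 1 ∧ c₂ = 2 := by omega
    by_contra h1c
    exact hA.1 ⟨1, r₂, r₃, 1, 2, c, le_rfl, h₁₂, h₂₃, h₃, le_rfl, by omega, by omega, hcn,
      by simpa using h1c, e₂, e₃⟩
  all_goals omega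

theorem Avoid312.apply_two_ne_true_of_apply_one (hA : Avoid312 m n A) (hn : 3 ≤ n)
    (h13 : A 1 3 = true) {a a' : ℕ} (ha : 2 ≤ a) (haa' : a < a') (ha' : a' ≤ m)
    (h1 : A a 1 = true) : A a' 2 ≠ true :=
  fun h2 => hA ⟨1, a, a', 1, 2, 3, le_rfl, by omega, haa', ha', le_rfl, by omega, by omega, hn,
    h13, h1, h2⟩

theorem MaximalAvoid312.apply_two_eq_true_of_min (hA : MaximalAvoid312 m n A) (hn : 2 ≤ n)
    {p : ℕ} (hp : 2 ≤ p) (hpm : p ≤ m) (hp1 : A p 1 = true)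
    (hmin : ∀ i, 2 ≤ i → i < p → A i 1 ≠ true) : A p 2 = true := by
  by_contra hz
  obtain ⟨r₁, r₂, r₃, c₁, c₂, c₃, h₁, h₁₂, h₂₃, h₃, g₁, g₁₂, g₂₃, g₃, hrole⟩ :=
    hA.exists_pattern_through (by omega) hpm (by omega) hn (by simpa using hz)
  obtain h | ⟨rfl, rfl, e₁, e₃⟩ | ⟨rfl, rfl, e₁, e₂⟩ := hrole
  · omega
  · exact hA.1 ⟨r₁, p, r₃, 1, c₂, c₃, h₁, h₁₂, h₂₃, h₃, le_rfl, by omega, g₂₃, g₃, e₁, hp1, e₃⟩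
  · obtain rfl : c₁ = 1 := by omega
    exact hmin r₂ (by omega) h₂₃ e₂

theorem MaximalAvoid312.card_rows_one_two (hA : MaximalAvoid312 m n A) (hm : 2 ≤ m)
    (hn : 3 ≤ n) (h13 : A 1 3 = true) :
    #{i ∈ Icc 1 m | A i 1 = true ∧ A i 2 = true} = 2 := by
  have hm1 : A m 1 = true := hA.apply_last_one (by omega) (by omega)
  have hex : ∃ p, 2 ≤ p ∧ A p 1 = true := ⟨m, by omega, hm1⟩
  obtain ⟨p, ⟨hp, hp1⟩, hmin⟩ : ∃ p, (2 ≤ p ∧ A p 1 = true) ∧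
      ∀ i, 2 ≤ i → i < p → A i 1 ≠ true :=
    ⟨_, Nat.find_spec hex, fun i hi hip h => Nat.find_min hex hip ⟨hi, h⟩⟩
  have hpm : p ≤ m := not_lt.1 fun hmp => hmin m (by omega) hmp hm1
  have hrows : {i ∈ Icc 1 m | A i 1 = true ∧ A i 2 = true} = {1, p} := by
    ext i
    simp only [mem_filter, mem_Icc, mem_insert, mem_singleton]
    constructor
    · rintro ⟨⟨hi, hi'⟩, h1, h2⟩
      by_contra hne
      obtain hip | hpi : i < p ∨ p < i := by omega
      · exact hmin i (by omega) hip h1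
      · exact hA.1.apply_two_ne_true_of_apply_one hn h13 hp hpi hi' hp1 h2
    · rintro (rfl | rfl)
      · exact ⟨⟨le_rfl, by omega⟩, hA.apply_one_one (by omega) (by omega),
          hA.apply_one_two (by omega) (by omega)⟩
      · exact ⟨⟨by omega, hpm⟩, hp1, hA.apply_two_eq_true_of_min (by omega) hp hpm hp1 hmin⟩
  rw [hrows, card_pair (by omega)]

lemma IsPattern312.of_setOne_of_lt_three {k i c r₁ r₂ r₃ c₁ c₂ c₃ : ℕ}
    (hanti : ∀ a a', 2 ≤ a → a < a' → a' ≤ m → A a 1 = true → A a' 2 ≠ true)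
    (h : IsPattern312 m k (setOne A i c) r₁ r₂ r₃ c₁ c₂ c₃) (hc₂ : c₂ < 3) :
    (c = 1 ∧ ∃ r, i < r ∧ r ≤ m ∧ A r 2 = true) ∨
      (c = 2 ∧ ∃ r, 2 ≤ r ∧ r < i ∧ A r 1 = true) := by
  obtain ⟨h₁, h₁₂, h₂₃, h₃, hc₁, hc₁₂, -, -, -, e₂, e₃⟩ := h
  obtain ⟨rfl, rfl⟩ : c₁ = 1 ∧ c₂ = 2 := by omega
  rw [setOne_eq_true_iff] at e₂ e₃
  rcases e₂ with ⟨rfl, rfl⟩ | e₂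
  · exact Or.inl ⟨rfl, r₃, h₂₃, h₃, e₃.resolve_left (by omega)⟩
  rcases e₃ with ⟨rfl, rfl⟩ | e₃
  · exact Or.inr ⟨rfl, r₂, by omega, h₂₃, e₂⟩
  exact (hanti r₂ r₃ (by omega) h₂₃ h₃ e₂ e₃).elim

theorem maximalAvoid312_mergeFirstCols (hA : MaximalAvoid312 m (n + 1) A)
    (hanti : ∀ a a', 2 ≤ a → a < a' → a' ≤ m → A a 1 = true → A a' 2 ≠ true) :
    MaximalAvoid312 m n (mergeFirstCols A) := by
  refine ⟨avoid312_mergeFirstCols hA.1, fun i j hi hi' hj hj' hz => ?_⟩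
  obtain rfl | hj2 := eq_or_lt_of_le hj
  · -- Unless a pattern through `(i,2)` or `(i,1)` survives the merge, these patterns give a `1`
    -- of column 1 above row `i` and a `1` of column 2 below it.
    rw [mergeFirstCols_one, Bool.or_eq_false_iff] at hz
    obtain ⟨_, _, _, _, c₂, _, hP⟩ :=
      not_avoid312_iff.1 (hA.2 i 2 hi hi' (by omega) (by omega) hz.2)
    obtain ⟨_, _, _, _, d₂, _, hQ⟩ :=
      not_avoid312_iff.1 (hA.2 i 1 hi hi' le_rfl (by omega) hz.1)
    obtain hc₂ | hc₂ := le_or_gt 3 c₂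
    · rw [setOne_mergeFirstCols i le_rfl]
      exact hP.not_avoid312_mergeFirstCols hc₂
    obtain hd₂ | hd₂ := le_or_gt 3 d₂
    · rw [setOne_mergeFirstCols_one]
      exact hQ.not_avoid312_mergeFirstCols hd₂
    obtain ⟨-, r, hir, hrm, hr2⟩ | ⟨h, -⟩ := hQ.of_setOne_of_lt_three hanti hd₂
    · obtain ⟨h, -⟩ | ⟨-, r', hr', hr'i, hr'1⟩ := hP.of_setOne_of_lt_three hanti hc₂
      · omega
      · exact (hanti r' r hr' (by omega) hrm hr'1 hr2).elim
    · omega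
  · rw [mergeFirstCols_of_two_le _ hj2] at hz
    obtain ⟨_, _, _, _, c₂, _, hP⟩ :=
      not_avoid312_iff.1 (hA.2 i (j + 1) hi hi' (by omega) (by omega) hz)
    rw [setOne_mergeFirstCols i hj]
    obtain hc₂ | hc₂ := le_or_gt 3 c₂
    · exact hP.not_avoid312_mergeFirstCols hc₂
    · obtain ⟨h, -⟩ | ⟨h, -⟩ := hP.of_setOne_of_lt_three hanti hc₂ <;> omega

theorem maximalAvoid312_dropFirstRow (hA : MaximalAvoid312 (m + 1) n A)
    (hrow : ∀ c, 3 ≤ c → c ≤ n → A 1 c = false) : MaximalAvoid312 m n (dropFirstRow A) := by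
  refine ⟨avoid312_dropFirstRow hA.1, fun i j hi hi' hj hj' hz => ?_⟩
  obtain ⟨r₁, r₂, r₃, c₁, c₂, c₃, hP⟩ :=
    not_avoid312_iff.1 (hA.2 (i + 1) j (by omega) (by omega) hj hj' hz)
  rw [setOne_dropFirstRow]
  refine hP.not_avoid312_dropFirstRow (by_contra fun hr₁ => ?_)
  obtain ⟨h₁, -, -, -, hc₁, hc₁₂, hc₂₃, hc₃, e₁, -⟩ := hP
  obtain rfl : r₁ = 1 := by omega
  rcases setOne_eq_true_iff.1 e₁ with ⟨h, -⟩ | e₁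
  · omega
  · simp [hrow c₃ (by omega) hc₃] at e₁

lemma sum_range_succ_eq_sum_Icc {M : Type*} [AddCommMonoid M] (f : ℕ → M) (n : ℕ) :
    ∑ i ∈ range n, f (i + 1) = ∑ i ∈ Icc 1 n, f i := by
  rw [range_eq_Ico, sum_Ico_add', zero_add, Ico_add_one_right_eq_Icc]

lemma onesCount_eq_sum (m n : ℕ) (A : ℕ → ℕ → Bool) :
    onesCount m n A =
      ∑ i ∈ range m, ∑ j ∈ range n, if A (i + 1) (j + 1) = true then 1 else 0 := by
  rw [onesCount, card_filter, sum_product, ← sum_range_succ_eq_sum_Icc]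
  exact sum_congr rfl fun i _ => (sum_range_succ_eq_sum_Icc _ n).symm

lemma onesCount_eq_mul (h : ∀ i j, 1 ≤ i → i ≤ m → 1 ≤ j → j ≤ n → A i j = true) :
    onesCount m n A = m * n := by
  rw [onesCount, filter_true_of_mem, card_product, Nat.card_Icc, Nat.card_Icc]
  · simp
  · simp only [mem_product, mem_Icc]
    exact fun p ⟨⟨hi, hi'⟩, hj, hj'⟩ => h p.1 p.2 hi hi' hj hj'

lemma onesCount_add_one_left (m n : ℕ) (A : ℕ → ℕ → Bool) :
    onesCount (m + 1) n A =
      onesCount m n (dropFirstRow A) + ∑ j ∈ range n, if A 1 (j + 1) = true then 1 else 0 := by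
  rw [onesCount_eq_sum, onesCount_eq_sum, sum_range_succ']
  rfl

lemma onesCount_mergeFirstCols (m n : ℕ) (A : ℕ → ℕ → Bool) :
    onesCount m (n + 2) A = onesCount m (n + 1) (mergeFirstCols A) +
      #{i ∈ Icc 1 m | A i 1 = true ∧ A i 2 = true} := by
  rw [onesCount_eq_sum, onesCount_eq_sum, card_filter, ← sum_range_succ_eq_sum_Icc,
    ← sum_add_distrib]
  refine sum_congr rfl fun i _ => ?_
  rw [sum_range_succ', sum_range_succ', sum_range_succ' _ n]
  simp only [zero_add, mergeFirstCols_one,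
    fun j => mergeFirstCols_of_two_le (A := A) (i + 1) (by omega : 2 ≤ j + 1 + 1)]
  cases A (i + 1) 1 <;> cases A (i + 1) 2 <;> simp

theorem MaximalAvoid312.onesCount_eq_dropFirstRow (hA : MaximalAvoid312 (m + 1) n A)
    (hn : 2 ≤ n) (h13 : A 1 3 = false) :
    onesCount (m + 1) n A = onesCount m n (dropFirstRow A) + 2 := by
  obtain ⟨n, rfl⟩ : ∃ k, n = k + 2 := ⟨n - 2, by omega⟩
  have hrest : ∑ j ∈ range n, (if A 1 (j + 1 + 1 + 1) = true then 1 else 0) = 0 :=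
    sum_eq_zero fun j hj => by
      rw [hA.apply_one_eq_false (by omega) h13 (by omega) (by simp at hj; omega)]
      rfl
  rw [onesCount_add_one_left, sum_range_succ', sum_range_succ', hrest, zero_add,
    hA.apply_one_one (by omega) (by omega), hA.apply_one_two (by omega) (by omega)]
  rfl

end

theorem onesCount_eq_of_maximalAvoid312 {m n : ℕ} {A : ℕ → ℕ → Bool}
    (hA : MaximalAvoid312 m n A) (hm : 2 ≤ m) (hn : 2 ≤ n) :
    onesCount m n A = 2 * m + 2 * n - 4 := by
  by_cases hsmall : m < 3 ∨ n < 3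
  · rw [onesCount_eq_mul fun i j => hA.eq_true_of_lt_three hsmall]
    obtain rfl | rfl : m = 2 ∨ n = 2 := by omega
    all_goals omega
  obtain ⟨hm3, hn3⟩ : 3 ≤ m ∧ 3 ≤ n := by omega
  cases h13 : A 1 3
  · obtain ⟨m, rfl⟩ : ∃ k, m = k + 1 := ⟨m - 1, by omega⟩
    have hA' := maximalAvoid312_dropFirstRow hA fun c => hA.apply_one_eq_false (by omega) h13
    rw [hA.onesCount_eq_dropFirstRow hn h13, onesCount_eq_of_maximalAvoid312 hA' (by omega) hn]
    omega
  · obtain ⟨n, rfl⟩ : ∃ k, n = k + 2 := ⟨n - 2, by omega⟩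
    have hA' := maximalAvoid312_mergeFirstCols hA fun a a' =>
      hA.1.apply_two_ne_true_of_apply_one hn3 h13
    rw [onesCount_mergeFirstCols, hA.card_rows_one_two hm hn3 h13,
      onesCount_eq_of_maximalAvoid312 hA' hm (by omega)]
    omega
termination_by m + n

theorem stmt_16 (m n : ℕ) (hm : 3 ≤ m) (hn : 3 ≤ n) (A B : ℕ → ℕ → Bool)
    (hA : MaximalAvoid312 m n A) (hB : MaximalAvoid312 m n B) :
    onesCount m n A = onesCount m n B := by
  rw [onesCount_eq_of_maximalAvoid312 hA (by omega) (by omega),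
    onesCount_eq_of_maximalAvoid312 hB (by omega) (by omega)]
end
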